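/- arXiv:1708.07309 — 7 statements merged into one kernel-verified Lean document; each statement's English description precedes it below -/
import Mathlib

section
/- (Theorem 2, part 1: parametric points lie on the distortion-rate curve.) Let s=(s₁,s₂) with s₁>0, s₂>0, and let P* be a test-channel pair attaining min_P F_s(P) (the minimum exists by compactness). Define R_{1,s} := I(Y₁;U₁*|U₂*), R_{2,s} := I(Y₂;U₂*) and D_s := −s₁R_{1,s} − s₂R_{2,s} + F_s(P*), where U₁*,U₂* are the auxiliary variables induced by P*. Then D_s = H(X|U₁*,U₂*) and D_s = D¹_CEO(R_{1,s},R_{2,s}). -/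
open Finset Real

noncomputable section

/-- Shannon entropy of a finitely supported nonnegative vector,
with the convention `0 · log 0 = 0` (natural logarithm). -/
def ent {α : Type} [Fintype α] (p : α → ℝ) : ℝ := ∑ a, Real.negMulLog (p a)

/-- `p` is a probability mass function on the finite alphabet `α`. -/
def IsPmf {α : Type} [Fintype α] (p : α → ℝ) : Prop := (∀ a, 0 ≤ p a) ∧ ∑ a, p a = 1

/-- `w` is a conditional pmf (channel) from `α` to `β`. -/
def IsChan {α β : Type} [Fintype α] [Fintype β] (w : α → β → ℝ) : Prop := ∀ a, IsPmf (w a)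

/-- Kullback–Leibler divergence between two vectors on a finite alphabet
(convention `0 · log (0/q) = 0` is automatic since `Real.log` of junk is multiplied by `0`). -/
def KL {α : Type} [Fintype α] (r q : α → ℝ) : ℝ := ∑ a, r a * Real.log (r a / q a)

variable {X Y1 Y2 U1 U2 : Type} [Fintype X] [Fintype Y1] [Fintype Y2] [Fintype U1] [Fintype U2]

/-- The joint pmf `p(x,y₁,y₂,u₁,u₂) = p(x)p(y₁|x)p(y₂|x)p(u₁|y₁)p(u₂|y₂)`
induced by the CEO source `(pX, W1, W2)` and a test-channel pair `(p1, p2)`. -/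
def ceoJoint (pX : X → ℝ) (W1 : X → Y1 → ℝ) (W2 : X → Y2 → ℝ)
    (p1 : Y1 → U1 → ℝ) (p2 : Y2 → U2 → ℝ) : X × Y1 × Y2 × U1 × U2 → ℝ :=
  fun z => pX z.1 * W1 z.1 z.2.1 * W2 z.1 z.2.2.1 * p1 z.2.1 z.2.2.2.1 * p2 z.2.2.1 z.2.2.2.2

/-- Marginal `p(x,u₁,u₂)`. -/
def mXU (j : X × Y1 × Y2 × U1 × U2 → ℝ) : X × U1 × U2 → ℝ :=
  fun z => ∑ y1, ∑ y2, j (z.1, y1, y2, z.2.1, z.2.2)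

/-- Marginal `p(u₁,u₂)`. -/
def mU12 (j : X × Y1 × Y2 × U1 × U2 → ℝ) : U1 × U2 → ℝ :=
  fun u => ∑ x, mXU j (x, u.1, u.2)

/-- Marginal `p(u₂)`. -/
def mU2 (j : X × Y1 × Y2 × U1 × U2 → ℝ) : U2 → ℝ := fun u2 => ∑ u1, mU12 j (u1, u2)

/-- Marginal `p(y₁,u₁,u₂)`. -/
def mY1U (j : X × Y1 × Y2 × U1 × U2 → ℝ) : Y1 × U1 × U2 → ℝ :=
  fun z => ∑ x, ∑ y2, j (x, z.1, y2, z.2.1, z.2.2)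

/-- Marginal `p(y₁,u₂)`. -/
def mY1U2 (j : X × Y1 × Y2 × U1 × U2 → ℝ) : Y1 × U2 → ℝ :=
  fun z => ∑ u1, mY1U j (z.1, u1, z.2)

/-- Marginal `p(y₂,u₂)`. -/
def mY2U2 (j : X × Y1 × Y2 × U1 × U2 → ℝ) : Y2 × U2 → ℝ :=
  fun z => ∑ x, ∑ y1, ∑ u1, j (x, y1, z.1, u1, z.2)

/-- Marginal `p(y₂)`. -/
def mY2 (j : X × Y1 × Y2 × U1 × U2 → ℝ) : Y2 → ℝ := fun y2 => ∑ u2, mY2U2 j (y2, u2)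

/-- Conditional entropy `H(X|U₁,U₂)` of the joint pmf `j`. -/
def condHX (j : X × Y1 × Y2 × U1 × U2 → ℝ) : ℝ := ent (mXU j) - ent (mU12 j)

/-- Conditional mutual information `I(Y₁;U₁|U₂)` of the joint pmf `j`. -/
def I1c (j : X × Y1 × Y2 × U1 × U2 → ℝ) : ℝ :=
  ent (mY1U2 j) + ent (mU12 j) - ent (mU2 j) - ent (mY1U j)

/-- Mutual information `I(Y₂;U₂)` of the joint pmf `j`. -/
def I2m (j : X × Y1 × Y2 × U1 × U2 → ℝ) : ℝ := ent (mY2 j) + ent (mU2 j) - ent (mY2U2 j)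

/-- The functional `F_s(P) = H(X|U₁,U₂) + s₁ I(Y₁;U₁|U₂) + s₂ I(Y₂;U₂)`. -/
def Fs (s1 s2 : ℝ) (j : X × Y1 × Y2 × U1 × U2 → ℝ) : ℝ :=
  condHX j + s1 * I1c j + s2 * I2m j

/-- `D¹_CEO(R₁,R₂)`: the minimal `H(X|U₁,U₂)` over test-channel pairs into the
auxiliary alphabets `V1`, `V2`, subject to `I(Y₁;U₁|U₂) ≤ R₁` and `I(Y₂;U₂) ≤ R₂`. -/
def Dceo1 (V1 V2 : Type) [Fintype V1] [Fintype V2]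
    (pX : X → ℝ) (W1 : X → Y1 → ℝ) (W2 : X → Y2 → ℝ) (R1 R2 : ℝ) : ℝ :=
  sInf {d : ℝ | ∃ p1 : Y1 → V1 → ℝ, ∃ p2 : Y2 → V2 → ℝ, IsChan p1 ∧ IsChan p2 ∧
    I1c (ceoJoint pX W1 W2 p1 p2) ≤ R1 ∧ I2m (ceoJoint pX W1 W2 p1 p2) ≤ R2 ∧
    d = condHX (ceoJoint pX W1 W2 p1 p2)}

/-- Marginal `p(y₁)` of the source. -/
def pY1m (pX : X → ℝ) (W1 : X → Y1 → ℝ) : Y1 → ℝ := fun y1 => ∑ x, pX x * W1 x y1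

/-- Marginal `p(y₂)` of the source. -/
def pY2m (pX : X → ℝ) (W2 : X → Y2 → ℝ) : Y2 → ℝ := fun y2 => ∑ x, pX x * W2 x y2

/-- `p(u₁|x) = Σ_{y₁} p(y₁|x) p(u₁|y₁)`. -/
def pU1X (W1 : X → Y1 → ℝ) (p1 : Y1 → U1 → ℝ) : X → U1 → ℝ :=
  fun x u1 => ∑ y1, W1 x y1 * p1 y1 u1

/-- `p(u₂|x) = Σ_{y₂} p(y₂|x) p(u₂|y₂)`. -/
def pU2X (W2 : X → Y2 → ℝ) (p2 : Y2 → U2 → ℝ) : X → U2 → ℝ :=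
  fun x u2 => ∑ y2, W2 x y2 * p2 y2 u2

/-- `p(u₁,u₂,x) = p(x) p(u₁|x) p(u₂|x)`. -/
def pUUX (pX : X → ℝ) (W1 : X → Y1 → ℝ) (W2 : X → Y2 → ℝ)
    (p1 : Y1 → U1 → ℝ) (p2 : Y2 → U2 → ℝ) : U1 × U2 × X → ℝ :=
  fun z => pX z.2.2 * pU1X W1 p1 z.2.2 z.1 * pU2X W2 p2 z.2.2 z.2.1

/-- `p(u₁,u₂)`. -/
def pUU (pX : X → ℝ) (W1 : X → Y1 → ℝ) (W2 : X → Y2 → ℝ)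
    (p1 : Y1 → U1 → ℝ) (p2 : Y2 → U2 → ℝ) : U1 × U2 → ℝ :=
  fun u => ∑ x, pUUX pX W1 W2 p1 p2 (u.1, u.2, x)

/-- `p(u₂) = Σ_{y₂} p(y₂) p(u₂|y₂)`. -/
def pU2m (pX : X → ℝ) (W2 : X → Y2 → ℝ) (p2 : Y2 → U2 → ℝ) : U2 → ℝ :=
  fun u2 => ∑ y2, pY2m pX W2 y2 * p2 y2 u2

/-- The Blahut–Arimoto functional `F_s(P,Q)` (real-valued version; the convention
`0 · log 0 = 0` is automatic since vanishing coefficients kill the corresponding terms). -/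
def FsPQ (s1 s2 : ℝ) (pX : X → ℝ) (W1 : X → Y1 → ℝ) (W2 : X → Y2 → ℝ)
    (p1 : Y1 → U1 → ℝ) (p2 : Y2 → U2 → ℝ)
    (qX : U1 × U2 → X → ℝ) (qUU : U1 × U2 → ℝ) (qU2 : U2 → ℝ) : ℝ :=
  -(∑ u1, ∑ u2, ∑ x, pUUX pX W1 W2 p1 p2 (u1, u2, x) * Real.log (qX (u1, u2) x))
  - s1 * (∑ u1, ∑ u2, pUU pX W1 W2 p1 p2 (u1, u2) * Real.log (qUU (u1, u2)))
  - s2 * (∑ u2, pU2m pX W2 p2 u2 * Real.log (qU2 u2))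
  + s1 * (∑ u1, ∑ y1, p1 y1 u1 * pY1m pX W1 y1 * Real.log (p1 y1 u1))
  + s2 * (∑ u2, ∑ y2, p2 y2 u2 * pY2m pX W2 y2 * Real.log (p2 y2 u2))
  + s1 * (∑ u2, pU2m pX W2 p2 u2 * Real.log (pU2m pX W2 p2 u2))

/-- The extended-real value of a term `−a · log q`: it is `+∞` if `a > 0` and `q = 0`. -/
def nlogE (a q : ℝ) : EReal := if 0 < a ∧ q = 0 then ⊤ else ((-(a * Real.log q) : ℝ) : EReal)

/-- The Blahut–Arimoto functional `F_s(P,Q)`, with values in `ℝ ∪ {+∞}`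
(a term `−a log q` with `a > 0` and `q = 0` is `+∞`). -/
def FsPQE (s1 s2 : ℝ) (pX : X → ℝ) (W1 : X → Y1 → ℝ) (W2 : X → Y2 → ℝ)
    (p1 : Y1 → U1 → ℝ) (p2 : Y2 → U2 → ℝ)
    (qX : U1 × U2 → X → ℝ) (qUU : U1 × U2 → ℝ) (qU2 : U2 → ℝ) : EReal :=
  (∑ u1, ∑ u2, ∑ x, nlogE (pUUX pX W1 W2 p1 p2 (u1, u2, x)) (qX (u1, u2) x))
  + (s1 : EReal) * (∑ u1, ∑ u2, nlogE (pUU pX W1 W2 p1 p2 (u1, u2)) (qUU (u1, u2)))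
  + (s2 : EReal) * (∑ u2, nlogE (pU2m pX W2 p2 u2) (qU2 u2))
  + ((s1 * (∑ u1, ∑ y1, p1 y1 u1 * pY1m pX W1 y1 * Real.log (p1 y1 u1))
      + s2 * (∑ u2, ∑ y2, p2 y2 u2 * pY2m pX W2 y2 * Real.log (p2 y2 u2))
      + s1 * (∑ u2, pU2m pX W2 p2 u2 * Real.log (pU2m pX W2 p2 u2)) : ℝ) : EReal)

/-- **Theorem 2, part 1** (parametric points lie on the distortion-rate curve). -/
theorem ceo_parametric_on_curve
    (pX : X → ℝ) (W1 : X → Y1 → ℝ) (W2 : X → Y2 → ℝ)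
    (hpX : IsPmf pX) (hW1 : IsChan W1) (hW2 : IsChan W2)
    (s1 s2 : ℝ) (hs1 : 0 < s1) (hs2 : 0 < s2)
    (P1s : Y1 → U1 → ℝ) (P2s : Y2 → U2 → ℝ) (hP1 : IsChan P1s) (hP2 : IsChan P2s)
    (hmin : ∀ (p1 : Y1 → U1 → ℝ) (p2 : Y2 → U2 → ℝ), IsChan p1 → IsChan p2 →
      Fs s1 s2 (ceoJoint pX W1 W2 P1s P2s) ≤ Fs s1 s2 (ceoJoint pX W1 W2 p1 p2))
    (R1s R2s Ds : ℝ)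
    (hR1 : R1s = I1c (ceoJoint pX W1 W2 P1s P2s))
    (hR2 : R2s = I2m (ceoJoint pX W1 W2 P1s P2s))
    (hD : Ds = -s1 * R1s - s2 * R2s + Fs s1 s2 (ceoJoint pX W1 W2 P1s P2s)) :
    Ds = condHX (ceoJoint pX W1 W2 P1s P2s) ∧
    Ds = Dceo1 U1 U2 pX W1 W2 R1s R2s := by
  set j := ceoJoint pX W1 W2 P1s P2s with hj
  have h1 : Ds = condHX j := by
    rw [hD, hR1, hR2]; simp [Fs]
  refine ⟨h1, ?_⟩
  have hmem : condHX j ∈ {d : ℝ | ∃ p1 : Y1 → U1 → ℝ, ∃ p2 : Y2 → U2 → ℝ,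
      IsChan p1 ∧ IsChan p2 ∧ I1c (ceoJoint pX W1 W2 p1 p2) ≤ R1s ∧
      I2m (ceoJoint pX W1 W2 p1 p2) ≤ R2s ∧ d = condHX (ceoJoint pX W1 W2 p1 p2)} :=
    ⟨P1s, P2s, hP1, hP2, le_of_eq hR1.symm, le_of_eq hR2.symm, rfl⟩
  have hlb : ∀ d ∈ {d : ℝ | ∃ p1 : Y1 → U1 → ℝ, ∃ p2 : Y2 → U2 → ℝ,
      IsChan p1 ∧ IsChan p2 ∧ I1c (ceoJoint pX W1 W2 p1 p2) ≤ R1s ∧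
      I2m (ceoJoint pX W1 W2 p1 p2) ≤ R2s ∧ d = condHX (ceoJoint pX W1 W2 p1 p2)},
      condHX j ≤ d := by
    rintro d ⟨p1, p2, hc1, hc2, hI1, hI2, rfl⟩
    have hF := hmin p1 p2 hc1 hc2
    have e1 : s1 * I1c (ceoJoint pX W1 W2 p1 p2) ≤ s1 * R1s :=
      mul_le_mul_of_nonneg_left hI1 hs1.le
    have e2 : s2 * I2m (ceoJoint pX W1 W2 p1 p2) ≤ s2 * R2s :=
      mul_le_mul_of_nonneg_left hI2 hs2.le
    have hR1' : R1s = I1c j := hR1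
    have hR2' : R2s = I2m j := hR2
    simp only [Fs] at hF
    nlinarith [hF, e1, e2]
  rw [h1, Dceo1]
  exact le_antisymm (le_csInf ⟨_, hmem⟩ hlb) (csInf_le ⟨_, hlb⟩ hmem)
end
end

section
/- (Proposition 2: double-minimization representation.) For every s=(s₁,s₂) with s₁>0, s₂>0, the minimum over test-channel pairs P of the inner infimum inf_Q F_s(P,Q) equals min_P F_s(P); that is, min_P inf_Q F_s(P,Q) = min_P F_s(P), and any P* attaining min_P F_s(P) attains the double minimization (together with the auxiliary pmfs Q induced by P*). -/
open Finset Real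

noncomputable section

variable {X Y1 Y2 U1 U2 : Type} [Fintype X] [Fintype Y1] [Fintype Y2] [Fintype U1] [Fintype U2]

/-- The conditional pmf `q*(x|u₁,u₂) = p(x|u₁,u₂)` induced by a test-channel pair
(an arbitrary conditional pmf, here uniform, when `p(u₁,u₂) = 0`). -/
def qXstar (pX : X → ℝ) (W1 : X → Y1 → ℝ) (W2 : X → Y2 → ℝ)
    (p1 : Y1 → U1 → ℝ) (p2 : Y2 → U2 → ℝ) : U1 × U2 → X → ℝ :=
  fun u x => if pUU pX W1 W2 p1 p2 u = 0 then ((Fintype.card X : ℝ))⁻¹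
    else pUUX pX W1 W2 p1 p2 (u.1, u.2, x) / pUU pX W1 W2 p1 p2 u

/-! Expressed through `p(u₁,u₂,x)`, `p(u₁,u₂)`, `p(u₂)` and the test channels (using the Markov
chain `U₁ – Y₁ – U₂`), `F_s(P)` has the shape of `F_s(P,Q)` with each cross-entropy term
`−Σ p log q` replaced by the corresponding (conditional) entropy. Gibbs' inequality bounds each
cross-entropy below by that entropy, with equality when `Q` is the matching conditional or marginal
of `P`; as `s₁, s₂ ≥ 0`, `F_s(P) ≤ F_s(P,Q)` with equality at the induced `Q`. Hence
`inf_Q F_s(P,Q) = F_s(P)`, and minimising over `P` gives the claim. -/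

set_option linter.unusedSectionVars false

theorem EReal.coe_finset_sum {ι : Type*} (s : Finset ι) (f : ι → ℝ) :
    ((∑ i ∈ s, f i : ℝ) : EReal) = ∑ i ∈ s, (f i : EReal) :=
  map_sum (⟨⟨((↑) : ℝ → EReal), EReal.coe_zero⟩, EReal.coe_add⟩ : ℝ →+ EReal) f s

section CrossEntropy

variable {ι : Type} [Fintype ι]

lemma nlogE_of_imp {a q : ℝ} (h : 0 < a → q ≠ 0) :
    nlogE a q = ((-(a * log q) : ℝ) : EReal) :=
  if_neg fun ⟨ha, hq⟩ => h ha hq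

lemma nlogE_self (a : ℝ) : nlogE a a = (negMulLog a : EReal) := by
  rw [nlogE_of_imp ne_of_gt, negMulLog, neg_mul]

lemma ent_eq_sum_nlogE_self (p : ι → ℝ) :
    ((ent p : ℝ) : EReal) = ∑ i, nlogE (p i) (p i) := by
  simp only [ent, nlogE_self, EReal.coe_finset_sum]

/-- Termwise Gibbs inequality `a log (a / A) - a log q ≥ a - A q`, i.e. `log x ≤ x - 1` at
`x = A q / a`. -/
lemma le_nlogE {a q A : ℝ} (ha : 0 ≤ a) (haA : a ≤ A) (hq : 0 ≤ q) :
    ((negMulLog a + a * log A + a - A * q : ℝ) : EReal) ≤ nlogE a q := by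
  rcases ha.eq_or_lt with rfl | ha
  · rw [nlogE_of_imp (absurd · (lt_irrefl 0)), EReal.coe_le_coe_iff]
    simp only [negMulLog_zero, zero_mul, add_zero, neg_zero, zero_sub, neg_nonpos]
    exact mul_nonneg (ha.trans haA) hq
  rcases hq.eq_or_lt with rfl | hq
  · simp [nlogE, ha]
  have hA : 0 < A := ha.trans_le haA
  rw [nlogE_of_imp fun _ => hq.ne', EReal.coe_le_coe_iff]
  have hlog := Real.log_le_sub_one_of_pos (show 0 < A * q / a by positivity)
  rw [Real.log_div (by positivity) ha.ne', Real.log_mul hA.ne' hq.ne'] at hlog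
  have key : a * (log A + log q - log a) ≤ A * q - a := by
    have := mul_le_mul_of_nonneg_left hlog ha.le
    rwa [mul_sub_one, mul_div_cancel₀ _ ha.ne'] at this
  rw [negMulLog]
  linarith

lemma ent_sub_negMulLog_sum_le_sum_nlogE {a q : ι → ℝ} (ha : ∀ i, 0 ≤ a i)
    (hq : ∀ i, 0 ≤ q i) (hq1 : ∑ i, q i ≤ 1) :
    ((ent a - negMulLog (∑ i, a i) : ℝ) : EReal) ≤ ∑ i, nlogE (a i) (q i) := by
  set A := ∑ i, a i
  have hA : 0 ≤ A := sum_nonneg fun i _ => ha i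
  calc ((ent a - negMulLog A : ℝ) : EReal)
      ≤ ((∑ i, (negMulLog (a i) + a i * log A + a i - A * q i) : ℝ) : EReal) := by
        rw [EReal.coe_le_coe_iff]
        simp only [ent, sum_add_distrib, sum_sub_distrib, ← sum_mul, ← mul_sum, negMulLog]
        linarith [mul_le_mul_of_nonneg_left hq1 hA]
    _ = ∑ i, ((negMulLog (a i) + a i * log A + a i - A * q i : ℝ) : EReal) :=
        EReal.coe_finset_sum _ _
    _ ≤ ∑ i, nlogE (a i) (q i) :=
        sum_le_sum fun i _ => le_nlogE (ha i) (single_le_sum (fun j _ => ha j) (mem_univ i)) (hq i)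

lemma ent_le_sum_nlogE {a q : ι → ℝ} (ha : IsPmf a) (hq : IsPmf q) :
    ((ent a : ℝ) : EReal) ≤ ∑ i, nlogE (a i) (q i) := by
  simpa only [ha.2, negMulLog_one, sub_zero] using
    ent_sub_negMulLog_sum_le_sum_nlogE ha.1 hq.1 hq.2.le

lemma nlogE_ite_div {a A : ℝ} (ha : 0 ≤ a) (haA : a ≤ A) (c : ℝ) :
    nlogE a (if A = 0 then c else a / A) = ((negMulLog a + a * log A : ℝ) : EReal) := by
  rcases ha.eq_or_lt with rfl | ha
  · rw [nlogE_of_imp (absurd · (lt_irrefl 0))]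
    simp
  have hA : 0 < A := ha.trans_le haA
  rw [if_neg hA.ne', nlogE_of_imp fun _ => (div_pos ha hA).ne', Real.log_div ha.ne' hA.ne',
    negMulLog]
  congr 1
  ring

lemma sum_nlogE_ite_div {a : ι → ℝ} {A : ℝ} (ha : ∀ i, 0 ≤ a i) (hA : ∑ i, a i = A)
    (c : ℝ) :
    ∑ i, nlogE (a i) (if A = 0 then c else a i / A) = ((ent a - negMulLog A : ℝ) : EReal) := by
  subst hA
  simp only [fun i => nlogE_ite_div (ha i) (single_le_sum (fun j _ => ha j) (mem_univ i)) c,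
    ← EReal.coe_finset_sum, ent, sum_add_distrib, ← sum_mul, negMulLog]
  congr 1
  ring

end CrossEntropy

section Pmf

variable {α β γ : Type} [Fintype α] [Fintype β] [Fintype γ]

lemma IsPmf.nonempty {p : α → ℝ} (hp : IsPmf p) : Nonempty α := by
  by_contra h
  rw [not_nonempty_iff] at h
  simpa using hp.2

lemma IsPmf.comp {p : α → ℝ} {w : α → β → ℝ} (hp : IsPmf p) (hw : IsChan w) :
    IsPmf fun b => ∑ a, p a * w a b := by
  refine ⟨fun b => sum_nonneg fun a _ => mul_nonneg (hp.1 a) ((hw a).1 b), ?_⟩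
  rw [sum_comm]
  simp only [← mul_sum, (hw _).2, mul_one, hp.2]

lemma IsChan.comp {v : α → β → ℝ} {w : β → γ → ℝ} (hv : IsChan v) (hw : IsChan w) :
    IsChan fun a c => ∑ b, v a b * w b c :=
  fun a => (hv a).comp hw

lemma IsChan.prod {v : α → β → ℝ} {w : α → γ → ℝ} (hv : IsChan v) (hw : IsChan w) :
    IsChan fun a (bc : β × γ) => v a bc.1 * w a bc.2 := by
  refine fun a => ⟨fun bc => mul_nonneg ((hv a).1 _) ((hw a).1 _), ?_⟩
  rw [Fintype.sum_prod_type, ← (hv a).2, ← mul_one (∑ b, v a b), ← (hw a).2, sum_mul_sum]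

lemma ent_comp_equiv (e : α ≃ β) (f : β → ℝ) : ent (f ∘ e) = ent f :=
  e.sum_comp (fun b => negMulLog (f b))

lemma ent_const_mul (c : ℝ) (g : β → ℝ) :
    ent (fun b => c * g b) = (∑ b, g b) * negMulLog c + c * ent g := by
  simp only [ent, negMulLog_mul, sum_add_distrib, ← sum_mul, ← mul_sum]

lemma sum_sum_mul_mul_log (w : α → β → ℝ) (c : α → ℝ) :
    ∑ b, ∑ a, w a b * c a * log (w a b) = -∑ a, c a * ent (w a) := by
  rw [sum_comm]
  simp only [ent, mul_sum, negMulLog, ← sum_neg_distrib]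
  exact sum_congr rfl fun _ _ => sum_congr rfl fun _ _ => by ring

end Pmf

section CeoSource

variable {pX : X → ℝ} {W1 : X → Y1 → ℝ} {W2 : X → Y2 → ℝ} {p1 : Y1 → U1 → ℝ} {p2 : Y2 → U2 → ℝ}

lemma isChan_pU1X (hW1 : IsChan W1) (hp1 : IsChan p1) : IsChan (pU1X W1 p1) := hW1.comp hp1

lemma isChan_pU2X (hW2 : IsChan W2) (hp2 : IsChan p2) : IsChan (pU2X W2 p2) := hW2.comp hp2

lemma isPmf_pY2m (hpX : IsPmf pX) (hW2 : IsChan W2) : IsPmf (pY2m pX W2) := hpX.comp hW2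

lemma isPmf_pU2m (hpX : IsPmf pX) (hW2 : IsChan W2) (hp2 : IsChan p2) :
    IsPmf (pU2m pX W2 p2) :=
  (isPmf_pY2m hpX hW2).comp hp2

lemma isPmf_pUU (hpX : IsPmf pX) (hW1 : IsChan W1) (hW2 : IsChan W2) (hp1 : IsChan p1)
    (hp2 : IsChan p2) : IsPmf (pUU pX W1 W2 p1 p2) := by
  convert hpX.comp ((isChan_pU1X hW1 hp1).prod (isChan_pU2X hW2 hp2)) using 1
  funext u
  simp only [pUU, pUUX, mul_assoc]

lemma pUUX_nonneg (hpX : IsPmf pX) (hW1 : IsChan W1) (hW2 : IsChan W2) (hp1 : IsChan p1)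
    (hp2 : IsChan p2) (z : U1 × U2 × X) : 0 ≤ pUUX pX W1 W2 p1 p2 z :=
  mul_nonneg (mul_nonneg (hpX.1 _) ((isChan_pU1X hW1 hp1 _).1 _)) ((isChan_pU2X hW2 hp2 _).1 _)

lemma isChan_qXstar (hpX : IsPmf pX) (hW1 : IsChan W1) (hW2 : IsChan W2) (hp1 : IsChan p1)
    (hp2 : IsChan p2) : IsChan (qXstar pX W1 W2 p1 p2) := by
  have := hpX.nonempty
  intro u
  unfold IsPmf
  by_cases hu : pUU pX W1 W2 p1 p2 u = 0
  · simp only [qXstar, hu, if_true]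
    exact ⟨fun _ => by positivity, by simp⟩
  · simp only [qXstar, hu, if_false]
    refine ⟨fun x => div_nonneg (pUUX_nonneg hpX hW1 hW2 hp1 hp2 _)
      ((isPmf_pUU hpX hW1 hW2 hp1 hp2).1 u), ?_⟩
    rw [← sum_div]
    exact div_self hu


lemma mXU_ceoJoint :
    mXU (ceoJoint pX W1 W2 p1 p2) = fun z => pUUX pX W1 W2 p1 p2 (z.2.1, z.2.2, z.1) := by
  funext z
  simp only [mXU, ceoJoint, pUUX, pU1X, pU2X, mul_sum, sum_mul]
  rw [sum_comm]
  exact sum_congr rfl fun _ _ => sum_congr rfl fun _ _ => by ring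

lemma mU12_ceoJoint : mU12 (ceoJoint pX W1 W2 p1 p2) = pUU pX W1 W2 p1 p2 := by
  funext u
  simp only [mU12, mXU_ceoJoint, pUU]

lemma mU2_ceoJoint (hW1 : IsChan W1) (hp1 : IsChan p1) :
    mU2 (ceoJoint pX W1 W2 p1 p2) = pU2m pX W2 p2 := by
  funext u2
  calc mU2 (ceoJoint pX W1 W2 p1 p2) u2
      = ∑ x, ∑ u1, pX x * pU1X W1 p1 x u1 * pU2X W2 p2 x u2 := by
        simp only [mU2, mU12_ceoJoint, pUU, pUUX]
        exact sum_comm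
    _ = ∑ x, pX x * ∑ y2, W2 x y2 * p2 y2 u2 := by
        simp only [← sum_mul, ← mul_sum, (isChan_pU1X hW1 hp1 _).2, mul_one, pU2X]
    _ = pU2m pX W2 p2 u2 := by
        simp only [pU2m, pY2m, mul_sum, sum_mul]
        rw [sum_comm]
        exact sum_congr rfl fun _ _ => sum_congr rfl fun _ _ => by ring

lemma mY2U2_ceoJoint (hW1 : IsChan W1) (hp1 : IsChan p1) :
    mY2U2 (ceoJoint pX W1 W2 p1 p2) = fun z => pY2m pX W2 z.1 * p2 z.1 z.2 := by
  funext z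
  simp only [mY2U2, ceoJoint, pY2m, sum_mul]
  refine sum_congr rfl fun x _ => ?_
  calc ∑ y1, ∑ u1, pX x * W1 x y1 * W2 x z.1 * p1 y1 u1 * p2 z.1 z.2
      = pX x * W2 x z.1 * p2 z.1 z.2 * ∑ y1, W1 x y1 * ∑ u1, p1 y1 u1 := by
        simp only [mul_sum]
        exact sum_congr rfl fun _ _ => sum_congr rfl fun _ _ => by ring
    _ = pX x * W2 x z.1 * p2 z.1 z.2 := by simp only [(hp1 _).2, mul_one, (hW1 x).2]

lemma mY2_ceoJoint (hW1 : IsChan W1) (hp1 : IsChan p1) (hp2 : IsChan p2) :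
    mY2 (ceoJoint pX W1 W2 p1 p2) = pY2m pX W2 := by
  funext y2
  simp only [mY2, mY2U2_ceoJoint hW1 hp1, ← mul_sum, (hp2 y2).2, mul_one]

lemma mY1U_ceoJoint (y : Y1) (u1 : U1) (u2 : U2) :
    mY1U (ceoJoint pX W1 W2 p1 p2) (y, u1, u2)
      = (∑ x, pX x * W1 x y * pU2X W2 p2 x u2) * p1 y u1 := by
  simp only [mY1U, ceoJoint, pU2X, mul_sum, sum_mul]
  exact sum_congr rfl fun _ _ => sum_congr rfl fun _ _ => by ring

lemma mY1U2_ceoJoint (hp1 : IsChan p1) (y : Y1) (u2 : U2) :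
    mY1U2 (ceoJoint pX W1 W2 p1 p2) (y, u2) = ∑ x, pX x * W1 x y * pU2X W2 p2 x u2 := by
  simp only [mY1U2, mY1U_ceoJoint, ← mul_sum, (hp1 y).2, mul_one]

/-- The Markov chain `U₁ – Y₁ – U₂`. -/
lemma mY1U_ceoJoint_eq_mul (hp1 : IsChan p1) (y : Y1) (u1 : U1) (u2 : U2) :
    mY1U (ceoJoint pX W1 W2 p1 p2) (y, u1, u2)
      = mY1U2 (ceoJoint pX W1 W2 p1 p2) (y, u2) * p1 y u1 := by
  rw [mY1U_ceoJoint, mY1U2_ceoJoint hp1]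

lemma sum_mY1U2_ceoJoint (hW2 : IsChan W2) (hp1 : IsChan p1) (hp2 : IsChan p2) (y : Y1) :
    ∑ u2, mY1U2 (ceoJoint pX W1 W2 p1 p2) (y, u2) = pY1m pX W1 y := by
  simp only [mY1U2_ceoJoint hp1, pY1m]
  rw [sum_comm]
  simp only [← mul_sum, (isChan_pU2X hW2 hp2 _).2, mul_one]

lemma condHX_ceoJoint :
    condHX (ceoJoint pX W1 W2 p1 p2) = ent (pUUX pX W1 W2 p1 p2) - ent (pUU pX W1 W2 p1 p2) := by
  rw [condHX, mU12_ceoJoint, mXU_ceoJoint,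
    ← ent_comp_equiv ((Equiv.prodComm X (U1 × U2)).trans (Equiv.prodAssoc U1 U2 X))]
  rfl

lemma ent_mY1U_ceoJoint (hW2 : IsChan W2) (hp1 : IsChan p1) (hp2 : IsChan p2) :
    ent (mY1U (ceoJoint pX W1 W2 p1 p2))
      = ent (mY1U2 (ceoJoint pX W1 W2 p1 p2)) + ∑ y, pY1m pX W1 y * ent (p1 y) := by
  have hj : mY1U (ceoJoint pX W1 W2 p1 p2)
      = fun z => mY1U2 (ceoJoint pX W1 W2 p1 p2) (z.1, z.2.2) * p1 z.1 z.2.1 :=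
    funext fun z => mY1U_ceoJoint_eq_mul hp1 z.1 z.2.1 z.2.2
  calc ent (mY1U (ceoJoint pX W1 W2 p1 p2))
      = ∑ y, ∑ u2, ent (fun u1 => mY1U2 (ceoJoint pX W1 W2 p1 p2) (y, u2) * p1 y u1) := by
        rw [hj]
        simp only [ent, Fintype.sum_prod_type]
        exact sum_congr rfl fun _ _ => sum_comm
    _ = ∑ y, ∑ u2, (negMulLog (mY1U2 (ceoJoint pX W1 W2 p1 p2) (y, u2))
          + mY1U2 (ceoJoint pX W1 W2 p1 p2) (y, u2) * ent (p1 y)) := by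
        simp only [ent_const_mul, (hp1 _).2, one_mul]
    _ = ent (mY1U2 (ceoJoint pX W1 W2 p1 p2)) + ∑ y, pY1m pX W1 y * ent (p1 y) := by
        rw [ent, Fintype.sum_prod_type]
        simp only [sum_add_distrib, ← sum_mul, sum_mY1U2_ceoJoint hW2 hp1 hp2]

lemma ent_mY2U2_ceoJoint (hW1 : IsChan W1) (hp1 : IsChan p1) (hp2 : IsChan p2) :
    ent (mY2U2 (ceoJoint pX W1 W2 p1 p2))
      = ent (pY2m pX W2) + ∑ y, pY2m pX W2 y * ent (p2 y) := by
  rw [mY2U2_ceoJoint hW1 hp1]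
  calc ent (fun z : Y2 × U2 => pY2m pX W2 z.1 * p2 z.1 z.2)
      = ∑ y, ent (fun u => pY2m pX W2 y * p2 y u) := Fintype.sum_prod_type _
    _ = ent (pY2m pX W2) + ∑ y, pY2m pX W2 y * ent (p2 y) := by
        simp only [ent_const_mul, (hp2 _).2, one_mul, sum_add_distrib]
        rfl

lemma I1c_ceoJoint (hW1 : IsChan W1) (hW2 : IsChan W2) (hp1 : IsChan p1) (hp2 : IsChan p2) :
    I1c (ceoJoint pX W1 W2 p1 p2) = ent (pUU pX W1 W2 p1 p2) - ent (pU2m pX W2 p2)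
      - ∑ y, pY1m pX W1 y * ent (p1 y) := by
  rw [I1c, ent_mY1U_ceoJoint hW2 hp1 hp2, mU12_ceoJoint, mU2_ceoJoint hW1 hp1]
  ring

lemma I2m_ceoJoint (hW1 : IsChan W1) (hp1 : IsChan p1) (hp2 : IsChan p2) :
    I2m (ceoJoint pX W1 W2 p1 p2) = ent (pU2m pX W2 p2) - ∑ y, pY2m pX W2 y * ent (p2 y) := by
  rw [I2m, ent_mY2U2_ceoJoint hW1 hp1 hp2, mY2_ceoJoint hW1 hp1 hp2, mU2_ceoJoint hW1 hp1]
  ring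

lemma Fs_ceoJoint (s1 s2 : ℝ) (hW1 : IsChan W1) (hW2 : IsChan W2) (hp1 : IsChan p1)
    (hp2 : IsChan p2) :
    Fs s1 s2 (ceoJoint pX W1 W2 p1 p2)
      = (ent (pUUX pX W1 W2 p1 p2) - ent (pUU pX W1 W2 p1 p2))
        + s1 * ent (pUU pX W1 W2 p1 p2) + s2 * ent (pU2m pX W2 p2)
        + (s1 * (∑ u1, ∑ y1, p1 y1 u1 * pY1m pX W1 y1 * log (p1 y1 u1))
          + s2 * (∑ u2, ∑ y2, p2 y2 u2 * pY2m pX W2 y2 * log (p2 y2 u2))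
          + s1 * (∑ u2, pU2m pX W2 p2 u2 * log (pU2m pX W2 p2 u2))) := by
  have hU2 : ∑ u2, pU2m pX W2 p2 u2 * log (pU2m pX W2 p2 u2) = -ent (pU2m pX W2 p2) := by
    simp only [ent, negMulLog, neg_mul, sum_neg_distrib, neg_neg]
  rw [Fs, condHX_ceoJoint, I1c_ceoJoint hW1 hW2 hp1 hp2, I2m_ceoJoint hW1 hp1 hp2,
    sum_sum_mul_mul_log, sum_sum_mul_mul_log, hU2]
  ring

lemma ent_pUUX_sub_ent_pUU :
    ent (pUUX pX W1 W2 p1 p2) - ent (pUU pX W1 W2 p1 p2)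
      = ∑ u1, ∑ u2, (ent (fun x => pUUX pX W1 W2 p1 p2 (u1, u2, x))
          - negMulLog (pUU pX W1 W2 p1 p2 (u1, u2))) := by
  simp only [ent, Fintype.sum_prod_type, sum_sub_distrib]

theorem Fs_le_FsPQE {s1 s2 : ℝ} (hs1 : 0 ≤ s1) (hs2 : 0 ≤ s2) (hpX : IsPmf pX)
    (hW1 : IsChan W1) (hW2 : IsChan W2) (hp1 : IsChan p1) (hp2 : IsChan p2)
    {qX : U1 × U2 → X → ℝ} {qUU : U1 × U2 → ℝ} {qU2 : U2 → ℝ}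
    (hqX : IsChan qX) (hqUU : IsPmf qUU) (hqU2 : IsPmf qU2) :
    ((Fs s1 s2 (ceoJoint pX W1 W2 p1 p2) : ℝ) : EReal)
      ≤ FsPQE s1 s2 pX W1 W2 p1 p2 qX qUU qU2 := by
  have hcondX : ((ent (pUUX pX W1 W2 p1 p2) - ent (pUU pX W1 W2 p1 p2) : ℝ) : EReal)
      ≤ ∑ u1, ∑ u2, ∑ x, nlogE (pUUX pX W1 W2 p1 p2 (u1, u2, x)) (qX (u1, u2) x) := by
    simp only [ent_pUUX_sub_ent_pUU, EReal.coe_finset_sum]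
    exact sum_le_sum fun u1 _ => sum_le_sum fun u2 _ => ent_sub_negMulLog_sum_le_sum_nlogE
      (fun x => pUUX_nonneg hpX hW1 hW2 hp1 hp2 _) (hqX _).1 (hqX _).2.le
  have hentUU : ((ent (pUU pX W1 W2 p1 p2) : ℝ) : EReal)
      ≤ ∑ u1, ∑ u2, nlogE (pUU pX W1 W2 p1 p2 (u1, u2)) (qUU (u1, u2)) := by
    simpa only [Fintype.sum_prod_type] using ent_le_sum_nlogE (isPmf_pUU hpX hW1 hW2 hp1 hp2) hqUU
  have hentU2 := ent_le_sum_nlogE (isPmf_pU2m hpX hW2 hp2) hqU2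
  rw [Fs_ceoJoint s1 s2 hW1 hW2 hp1 hp2, FsPQE]
  simp only [EReal.coe_add, EReal.coe_mul]
  have hs1' : (0 : EReal) ≤ s1 := EReal.coe_nonneg.2 hs1
  have hs2' : (0 : EReal) ≤ s2 := EReal.coe_nonneg.2 hs2
  gcongr

theorem FsPQE_qXstar (s1 s2 : ℝ) (hpX : IsPmf pX) (hW1 : IsChan W1) (hW2 : IsChan W2)
    (hp1 : IsChan p1) (hp2 : IsChan p2) :
    FsPQE s1 s2 pX W1 W2 p1 p2 (qXstar pX W1 W2 p1 p2) (pUU pX W1 W2 p1 p2) (pU2m pX W2 p2)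
      = ((Fs s1 s2 (ceoJoint pX W1 W2 p1 p2) : ℝ) : EReal) := by
  have hcondX : ∑ u1, ∑ u2, ∑ x,
      nlogE (pUUX pX W1 W2 p1 p2 (u1, u2, x)) (qXstar pX W1 W2 p1 p2 (u1, u2) x)
        = ((ent (pUUX pX W1 W2 p1 p2) - ent (pUU pX W1 W2 p1 p2) : ℝ) : EReal) := by
    simp only [ent_pUUX_sub_ent_pUU, EReal.coe_finset_sum]
    exact sum_congr rfl fun u1 _ => sum_congr rfl fun u2 _ =>
      sum_nlogE_ite_div (fun x => pUUX_nonneg hpX hW1 hW2 hp1 hp2 _) rfl _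
  have hentUU : ∑ u1, ∑ u2, nlogE (pUU pX W1 W2 p1 p2 (u1, u2)) (pUU pX W1 W2 p1 p2 (u1, u2))
      = ((ent (pUU pX W1 W2 p1 p2) : ℝ) : EReal) := by
    rw [ent_eq_sum_nlogE_self, Fintype.sum_prod_type]
  rw [FsPQE, hcondX, hentUU, ← ent_eq_sum_nlogE_self, Fs_ceoJoint s1 s2 hW1 hW2 hp1 hp2]
  simp only [EReal.coe_add, EReal.coe_mul]

end CeoSource

/-- **Proposition 2** (double-minimization representation):
`min_P inf_Q F_s(P,Q) = min_P F_s(P)`, and any `P*` attaining `min_P F_s(P)` attains the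
double minimization together with the auxiliary pmfs `Q` induced by `P*`. -/
theorem ceo_double_minimization
    (pX : X → ℝ) (W1 : X → Y1 → ℝ) (W2 : X → Y2 → ℝ)
    (hpX : IsPmf pX) (hW1 : IsChan W1) (hW2 : IsChan W2)
    (s1 s2 : ℝ) (hs1 : 0 < s1) (hs2 : 0 < s2)
    (P1s : Y1 → U1 → ℝ) (P2s : Y2 → U2 → ℝ) (hP1 : IsChan P1s) (hP2 : IsChan P2s)
    (hmin : ∀ (p1 : Y1 → U1 → ℝ) (p2 : Y2 → U2 → ℝ), IsChan p1 → IsChan p2 →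
      Fs s1 s2 (ceoJoint pX W1 W2 P1s P2s) ≤ Fs s1 s2 (ceoJoint pX W1 W2 p1 p2)) :
    sInf {v : EReal | ∃ p1 : Y1 → U1 → ℝ, ∃ p2 : Y2 → U2 → ℝ,
        ∃ qX : U1 × U2 → X → ℝ, ∃ qUU : U1 × U2 → ℝ, ∃ qU2 : U2 → ℝ,
        IsChan p1 ∧ IsChan p2 ∧ IsChan qX ∧ IsPmf qUU ∧ IsPmf qU2 ∧
        v = FsPQE s1 s2 pX W1 W2 p1 p2 qX qUU qU2}
      = ((Fs s1 s2 (ceoJoint pX W1 W2 P1s P2s) : ℝ) : EReal) ∧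
    FsPQE s1 s2 pX W1 W2 P1s P2s (qXstar pX W1 W2 P1s P2s)
        (pUU pX W1 W2 P1s P2s) (pU2m pX W2 P2s)
      = ((Fs s1 s2 (ceoJoint pX W1 W2 P1s P2s) : ℝ) : EReal) := by
  have hstar := FsPQE_qXstar s1 s2 hpX hW1 hW2 hP1 hP2
  refine ⟨IsLeast.csInf_eq ⟨⟨P1s, P2s, _, _, _, hP1, hP2, isChan_qXstar hpX hW1 hW2 hP1 hP2,
    isPmf_pUU hpX hW1 hW2 hP1 hP2, isPmf_pU2m hpX hW2 hP2, hstar.symm⟩, ?_⟩, hstar⟩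
  rintro _ ⟨p1, p2, qX, qUU, qU2, hp1, hp2, hqX, hqUU, hqU2, rfl⟩
  exact (EReal.coe_le_coe_iff.2 (hmin p1 p2 hp1 hp2)).trans
    (Fs_le_FsPQE hs1.le hs2.le hpX hW1 hW2 hp1 hp2 hqX hqUU hqU2)
end
end

section
/- (Lemma 1, convexity in P, coordinatewise.) Fix s=(s₁,s₂) with s₁>0, s₂>0, and fix an auxiliary triple Q with strictly positive components. Then: (a) for every fixed conditional pmf P_{U₂|Y₂}, the map P_{U₁|Y₁} ↦ F_s((P_{U₁|Y₁},P_{U₂|Y₂}),Q) is convex on the convex set of conditional pmfs from 𝒴₁ to 𝒰₁; and (b) for every fixed conditional pmf P_{U₁|Y₁}, the map P_{U₂|Y₂} ↦ F_s((P_{U₁|Y₁},P_{U₂|Y₂}),Q) is convex on the convex set of conditional pmfs from 𝒴₂ to 𝒰₂. -/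
open Finset Real

noncomputable section

variable {X Y1 Y2 U1 U2 : Type} [Fintype X] [Fintype Y1] [Fintype Y2] [Fintype U1] [Fintype U2]

/- ------------------- auxiliary lemmas ------------------- -/

lemma convex_chanSet {α β : Type} [Fintype α] [Fintype β] :
    Convex ℝ {w : α → β → ℝ | IsChan w} := by
  intro p hp r hr a b ha hb hab
  intro y
  constructor
  · intro u
    have h1 := (hp y).1 u
    have h2 := (hr y).1 u
    simp only [Pi.add_apply, Pi.smul_apply, smul_eq_mul]
    positivity
  · simp only [Pi.add_apply, Pi.smul_apply, smul_eq_mul]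
    rw [Finset.sum_add_distrib, ← Finset.mul_sum, ← Finset.mul_sum, (hp y).2, (hr y).2]
    simpa using hab

lemma mulLog_comb {t u a b : ℝ} (ht : 0 ≤ t) (hu : 0 ≤ u) (ha : 0 ≤ a) (hb : 0 ≤ b)
    (hab : a + b = 1) :
    (a * t + b * u) * Real.log (a * t + b * u)
      ≤ a * (t * Real.log t) + b * (u * Real.log u) := by
  have := Real.convexOn_mul_log.2 (Set.mem_Ici.2 ht) (Set.mem_Ici.2 hu) ha hb hab
  simpa [smul_eq_mul] using this

/-- **Lemma 1, convexity in `P`, coordinatewise**: for fixed `s₁, s₂ > 0` and a strictly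
positive auxiliary triple `Q`, the map `P_{U₁|Y₁} ↦ F_s((P_{U₁|Y₁},P_{U₂|Y₂}),Q)` is convex
on the set of channels from `Y₁` to `U₁` for each fixed channel `P_{U₂|Y₂}`, and symmetrically
the map `P_{U₂|Y₂} ↦ F_s((P_{U₁|Y₁},P_{U₂|Y₂}),Q)` is convex for each fixed `P_{U₁|Y₁}`. -/
theorem ceo_FsPQ_convex_in_P
    (pX : X → ℝ) (W1 : X → Y1 → ℝ) (W2 : X → Y2 → ℝ)
    (hpX : IsPmf pX) (hW1 : IsChan W1) (hW2 : IsChan W2)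
    (s1 s2 : ℝ) (hs1 : 0 < s1) (hs2 : 0 < s2)
    (qX : U1 × U2 → X → ℝ) (qUU : U1 × U2 → ℝ) (qU2 : U2 → ℝ)
    (hqX : IsChan qX) (hqUU : IsPmf qUU) (hqU2 : IsPmf qU2)
    (hqXpos : ∀ u x, 0 < qX u x) (hqUUpos : ∀ u, 0 < qUU u) (hqU2pos : ∀ u2, 0 < qU2 u2) :
    (∀ p2 : Y2 → U2 → ℝ, IsChan p2 →
      ConvexOn ℝ {w : Y1 → U1 → ℝ | IsChan w}
        (fun w => FsPQ s1 s2 pX W1 W2 w p2 qX qUU qU2)) ∧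
    (∀ p1 : Y1 → U1 → ℝ, IsChan p1 →
      ConvexOn ℝ {w : Y2 → U2 → ℝ | IsChan w}
        (fun w => FsPQ s1 s2 pX W1 W2 p1 w qX qUU qU2)) := by
  
  have hpY1 : ∀ y1, 0 ≤ pY1m pX W1 y1 := fun y1 =>
    Finset.sum_nonneg fun x _ => mul_nonneg (hpX.1 x) ((hW1 x).1 y1)
  have hpY2 : ∀ y2, 0 ≤ pY2m pX W2 y2 := fun y2 =>
    Finset.sum_nonneg fun x _ => mul_nonneg (hpX.1 x) ((hW2 x).1 y2)
  constructor
  · -- convexity in p1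
    intro p2 hp2
    refine ⟨convex_chanSet, ?_⟩
    intro p hp r hr a b ha hb hab
    have hb' : b = 1 - a := by linarith
    subst hb'
    simp only [smul_eq_mul]
    have hU1X : ∀ (x : X) (u1 : U1), pU1X W1 (a • p + (1 - a) • r) x u1
        = a * pU1X W1 p x u1 + (1 - a) * pU1X W1 r x u1 := by
      intro x u1
      simp only [pU1X, Pi.add_apply, Pi.smul_apply, smul_eq_mul, mul_add,
        Finset.sum_add_distrib, Finset.mul_sum]
      congr 1 <;> exact Finset.sum_congr rfl (fun _ _ => by ring)
    have hUUX : ∀ (u1 : U1) (u2 : U2) (x : X),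
        pUUX pX W1 W2 (a • p + (1 - a) • r) p2 (u1, u2, x)
        = a * pUUX pX W1 W2 p p2 (u1, u2, x)
          + (1 - a) * pUUX pX W1 W2 r p2 (u1, u2, x) := by
      intro u1 u2 x
      simp only [pUUX, hU1X]
      ring
    have h1 : (∑ u1, ∑ u2, ∑ x, pUUX pX W1 W2 (a • p + (1 - a) • r) p2 (u1, u2, x)
          * Real.log (qX (u1, u2) x))
        = a * (∑ u1, ∑ u2, ∑ x, pUUX pX W1 W2 p p2 (u1, u2, x) * Real.log (qX (u1, u2) x))
          + (1 - a) * (∑ u1, ∑ u2, ∑ x, pUUX pX W1 W2 r p2 (u1, u2, x)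
              * Real.log (qX (u1, u2) x)) := by
      have hterm : ∀ (u1 : U1) (u2 : U2) (x : X),
          pUUX pX W1 W2 (a • p + (1 - a) • r) p2 (u1, u2, x) * Real.log (qX (u1, u2) x)
          = a * (pUUX pX W1 W2 p p2 (u1, u2, x) * Real.log (qX (u1, u2) x))
            + (1 - a) * (pUUX pX W1 W2 r p2 (u1, u2, x) * Real.log (qX (u1, u2) x)) := by
        intro u1 u2 x; rw [hUUX]; ring
      simp only [hterm, Finset.sum_add_distrib, Finset.mul_sum]
    have hUU : ∀ (u1 : U1) (u2 : U2), pUU pX W1 W2 (a • p + (1 - a) • r) p2 (u1, u2)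
        = a * pUU pX W1 W2 p p2 (u1, u2) + (1 - a) * pUU pX W1 W2 r p2 (u1, u2) := by
      intro u1 u2
      simp only [pUU, hUUX, Finset.sum_add_distrib, Finset.mul_sum]
    have h2 : (∑ u1, ∑ u2, pUU pX W1 W2 (a • p + (1 - a) • r) p2 (u1, u2)
          * Real.log (qUU (u1, u2)))
        = a * (∑ u1, ∑ u2, pUU pX W1 W2 p p2 (u1, u2) * Real.log (qUU (u1, u2)))
          + (1 - a) * (∑ u1, ∑ u2, pUU pX W1 W2 r p2 (u1, u2) * Real.log (qUU (u1, u2))) := by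
      have hterm : ∀ (u1 : U1) (u2 : U2),
          pUU pX W1 W2 (a • p + (1 - a) • r) p2 (u1, u2) * Real.log (qUU (u1, u2))
          = a * (pUU pX W1 W2 p p2 (u1, u2) * Real.log (qUU (u1, u2)))
            + (1 - a) * (pUU pX W1 W2 r p2 (u1, u2) * Real.log (qUU (u1, u2))) := by
        intro u1 u2; rw [hUU]; ring
      simp only [hterm, Finset.sum_add_distrib, Finset.mul_sum]
    have h4 : (∑ u1, ∑ y1, (a • p + (1 - a) • r) y1 u1 * pY1m pX W1 y1
          * Real.log ((a • p + (1 - a) • r) y1 u1))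
        ≤ a * (∑ u1, ∑ y1, p y1 u1 * pY1m pX W1 y1 * Real.log (p y1 u1))
          + (1 - a) * (∑ u1, ∑ y1, r y1 u1 * pY1m pX W1 y1 * Real.log (r y1 u1)) := by
      have hterm : ∀ (u1 : U1) (y1 : Y1),
          (a • p + (1 - a) • r) y1 u1 * pY1m pX W1 y1
            * Real.log ((a • p + (1 - a) • r) y1 u1)
          ≤ a * (p y1 u1 * pY1m pX W1 y1 * Real.log (p y1 u1))
            + (1 - a) * (r y1 u1 * pY1m pX W1 y1 * Real.log (r y1 u1)) := by
        intro u1 y1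
        have happ : (a • p + (1 - a) • r) y1 u1 = a * p y1 u1 + (1 - a) * r y1 u1 := by
          simp
        rw [happ]
        have key := mulLog_comb ((hp y1).1 u1) ((hr y1).1 u1) ha hb hab
        calc (a * p y1 u1 + (1 - a) * r y1 u1) * pY1m pX W1 y1
              * Real.log (a * p y1 u1 + (1 - a) * r y1 u1)
            = pY1m pX W1 y1 * ((a * p y1 u1 + (1 - a) * r y1 u1)
                * Real.log (a * p y1 u1 + (1 - a) * r y1 u1)) := by ring
          _ ≤ pY1m pX W1 y1 * (a * (p y1 u1 * Real.log (p y1 u1))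
                + (1 - a) * (r y1 u1 * Real.log (r y1 u1))) :=
              mul_le_mul_of_nonneg_left key (hpY1 y1)
          _ = a * (p y1 u1 * pY1m pX W1 y1 * Real.log (p y1 u1))
                + (1 - a) * (r y1 u1 * pY1m pX W1 y1 * Real.log (r y1 u1)) := by ring
      calc (∑ u1, ∑ y1, (a • p + (1 - a) • r) y1 u1 * pY1m pX W1 y1
              * Real.log ((a • p + (1 - a) • r) y1 u1))
          ≤ ∑ u1, ∑ y1, (a * (p y1 u1 * pY1m pX W1 y1 * Real.log (p y1 u1))
              + (1 - a) * (r y1 u1 * pY1m pX W1 y1 * Real.log (r y1 u1))) :=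
            Finset.sum_le_sum fun u1 _ => Finset.sum_le_sum fun y1 _ => hterm u1 y1
        _ = _ := by simp only [Finset.sum_add_distrib, Finset.mul_sum]
    have h4' := mul_le_mul_of_nonneg_left h4 hs1.le
    simp only [FsPQ]
    rw [h1, h2]
    nlinarith [h4']
  · -- convexity in p2
    intro p1 hp1
    refine ⟨convex_chanSet, ?_⟩
    intro p hp r hr a b ha hb hab
    have hb' : b = 1 - a := by linarith
    subst hb'
    simp only [smul_eq_mul]
    have hU2X : ∀ (x : X) (u2 : U2), pU2X W2 (a • p + (1 - a) • r) x u2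
        = a * pU2X W2 p x u2 + (1 - a) * pU2X W2 r x u2 := by
      intro x u2
      simp only [pU2X, Pi.add_apply, Pi.smul_apply, smul_eq_mul, mul_add,
        Finset.sum_add_distrib, Finset.mul_sum]
      congr 1 <;> exact Finset.sum_congr rfl (fun _ _ => by ring)
    have hUUX : ∀ (u1 : U1) (u2 : U2) (x : X),
        pUUX pX W1 W2 p1 (a • p + (1 - a) • r) (u1, u2, x)
        = a * pUUX pX W1 W2 p1 p (u1, u2, x)
          + (1 - a) * pUUX pX W1 W2 p1 r (u1, u2, x) := by
      intro u1 u2 x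
      simp only [pUUX, hU2X]
      ring
    have h1 : (∑ u1, ∑ u2, ∑ x, pUUX pX W1 W2 p1 (a • p + (1 - a) • r) (u1, u2, x)
          * Real.log (qX (u1, u2) x))
        = a * (∑ u1, ∑ u2, ∑ x, pUUX pX W1 W2 p1 p (u1, u2, x) * Real.log (qX (u1, u2) x))
          + (1 - a) * (∑ u1, ∑ u2, ∑ x, pUUX pX W1 W2 p1 r (u1, u2, x)
              * Real.log (qX (u1, u2) x)) := by
      have hterm : ∀ (u1 : U1) (u2 : U2) (x : X),
          pUUX pX W1 W2 p1 (a • p + (1 - a) • r) (u1, u2, x) * Real.log (qX (u1, u2) x)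
          = a * (pUUX pX W1 W2 p1 p (u1, u2, x) * Real.log (qX (u1, u2) x))
            + (1 - a) * (pUUX pX W1 W2 p1 r (u1, u2, x) * Real.log (qX (u1, u2) x)) := by
        intro u1 u2 x; rw [hUUX]; ring
      simp only [hterm, Finset.sum_add_distrib, Finset.mul_sum]
    have hUU : ∀ (u1 : U1) (u2 : U2), pUU pX W1 W2 p1 (a • p + (1 - a) • r) (u1, u2)
        = a * pUU pX W1 W2 p1 p (u1, u2) + (1 - a) * pUU pX W1 W2 p1 r (u1, u2) := by
      intro u1 u2
      simp only [pUU, hUUX, Finset.sum_add_distrib, Finset.mul_sum]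
    have h2 : (∑ u1, ∑ u2, pUU pX W1 W2 p1 (a • p + (1 - a) • r) (u1, u2)
          * Real.log (qUU (u1, u2)))
        = a * (∑ u1, ∑ u2, pUU pX W1 W2 p1 p (u1, u2) * Real.log (qUU (u1, u2)))
          + (1 - a) * (∑ u1, ∑ u2, pUU pX W1 W2 p1 r (u1, u2) * Real.log (qUU (u1, u2))) := by
      have hterm : ∀ (u1 : U1) (u2 : U2),
          pUU pX W1 W2 p1 (a • p + (1 - a) • r) (u1, u2) * Real.log (qUU (u1, u2))
          = a * (pUU pX W1 W2 p1 p (u1, u2) * Real.log (qUU (u1, u2)))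
            + (1 - a) * (pUU pX W1 W2 p1 r (u1, u2) * Real.log (qUU (u1, u2))) := by
        intro u1 u2; rw [hUU]; ring
      simp only [hterm, Finset.sum_add_distrib, Finset.mul_sum]
    have hU2m : ∀ u2 : U2, pU2m pX W2 (a • p + (1 - a) • r) u2
        = a * pU2m pX W2 p u2 + (1 - a) * pU2m pX W2 r u2 := by
      intro u2
      simp only [pU2m, Pi.add_apply, Pi.smul_apply, smul_eq_mul, mul_add,
        Finset.sum_add_distrib, Finset.mul_sum]
      congr 1 <;> exact Finset.sum_congr rfl (fun _ _ => by ring)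
    have h3 : (∑ u2, pU2m pX W2 (a • p + (1 - a) • r) u2 * Real.log (qU2 u2))
        = a * (∑ u2, pU2m pX W2 p u2 * Real.log (qU2 u2))
          + (1 - a) * (∑ u2, pU2m pX W2 r u2 * Real.log (qU2 u2)) := by
      have hterm : ∀ u2 : U2,
          pU2m pX W2 (a • p + (1 - a) • r) u2 * Real.log (qU2 u2)
          = a * (pU2m pX W2 p u2 * Real.log (qU2 u2))
            + (1 - a) * (pU2m pX W2 r u2 * Real.log (qU2 u2)) := by
        intro u2; rw [hU2m]; ring
      simp only [hterm, Finset.sum_add_distrib, Finset.mul_sum]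
    have h5 : (∑ u2, ∑ y2, (a • p + (1 - a) • r) y2 u2 * pY2m pX W2 y2
          * Real.log ((a • p + (1 - a) • r) y2 u2))
        ≤ a * (∑ u2, ∑ y2, p y2 u2 * pY2m pX W2 y2 * Real.log (p y2 u2))
          + (1 - a) * (∑ u2, ∑ y2, r y2 u2 * pY2m pX W2 y2 * Real.log (r y2 u2)) := by
      have hterm : ∀ (u2 : U2) (y2 : Y2),
          (a • p + (1 - a) • r) y2 u2 * pY2m pX W2 y2
            * Real.log ((a • p + (1 - a) • r) y2 u2)
          ≤ a * (p y2 u2 * pY2m pX W2 y2 * Real.log (p y2 u2))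
            + (1 - a) * (r y2 u2 * pY2m pX W2 y2 * Real.log (r y2 u2)) := by
        intro u2 y2
        have happ : (a • p + (1 - a) • r) y2 u2 = a * p y2 u2 + (1 - a) * r y2 u2 := by
          simp
        rw [happ]
        have key := mulLog_comb ((hp y2).1 u2) ((hr y2).1 u2) ha hb hab
        calc (a * p y2 u2 + (1 - a) * r y2 u2) * pY2m pX W2 y2
              * Real.log (a * p y2 u2 + (1 - a) * r y2 u2)
            = pY2m pX W2 y2 * ((a * p y2 u2 + (1 - a) * r y2 u2)
                * Real.log (a * p y2 u2 + (1 - a) * r y2 u2)) := by ring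
          _ ≤ pY2m pX W2 y2 * (a * (p y2 u2 * Real.log (p y2 u2))
                + (1 - a) * (r y2 u2 * Real.log (r y2 u2))) :=
              mul_le_mul_of_nonneg_left key (hpY2 y2)
          _ = a * (p y2 u2 * pY2m pX W2 y2 * Real.log (p y2 u2))
                + (1 - a) * (r y2 u2 * pY2m pX W2 y2 * Real.log (r y2 u2)) := by ring
      calc (∑ u2, ∑ y2, (a • p + (1 - a) • r) y2 u2 * pY2m pX W2 y2
              * Real.log ((a • p + (1 - a) • r) y2 u2))
          ≤ ∑ u2, ∑ y2, (a * (p y2 u2 * pY2m pX W2 y2 * Real.log (p y2 u2))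
              + (1 - a) * (r y2 u2 * pY2m pX W2 y2 * Real.log (r y2 u2))) :=
            Finset.sum_le_sum fun u2 _ => Finset.sum_le_sum fun y2 _ => hterm u2 y2
        _ = _ := by simp only [Finset.sum_add_distrib, Finset.mul_sum]
    have hU2mpos : ∀ (w : Y2 → U2 → ℝ), IsChan w → ∀ u2 : U2, 0 ≤ pU2m pX W2 w u2 := by
      intro w hw u2
      exact Finset.sum_nonneg fun y2 _ => mul_nonneg (hpY2 y2) ((hw y2).1 u2)
    have h6 : (∑ u2, pU2m pX W2 (a • p + (1 - a) • r) u2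
          * Real.log (pU2m pX W2 (a • p + (1 - a) • r) u2))
        ≤ a * (∑ u2, pU2m pX W2 p u2 * Real.log (pU2m pX W2 p u2))
          + (1 - a) * (∑ u2, pU2m pX W2 r u2 * Real.log (pU2m pX W2 r u2)) := by
      have hterm : ∀ u2 : U2,
          pU2m pX W2 (a • p + (1 - a) • r) u2
            * Real.log (pU2m pX W2 (a • p + (1 - a) • r) u2)
          ≤ a * (pU2m pX W2 p u2 * Real.log (pU2m pX W2 p u2))
            + (1 - a) * (pU2m pX W2 r u2 * Real.log (pU2m pX W2 r u2)) := by
        intro u2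
        rw [hU2m u2]
        exact mulLog_comb (hU2mpos p hp u2) (hU2mpos r hr u2) ha hb hab
      calc (∑ u2, pU2m pX W2 (a • p + (1 - a) • r) u2
              * Real.log (pU2m pX W2 (a • p + (1 - a) • r) u2))
          ≤ ∑ u2, (a * (pU2m pX W2 p u2 * Real.log (pU2m pX W2 p u2))
              + (1 - a) * (pU2m pX W2 r u2 * Real.log (pU2m pX W2 r u2))) :=
            Finset.sum_le_sum fun u2 _ => hterm u2
        _ = _ := by simp only [Finset.sum_add_distrib, Finset.mul_sum]
    have h5' := mul_le_mul_of_nonneg_left h5 hs2.le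
    have h6' := mul_le_mul_of_nonneg_left h6 hs1.le
    simp only [FsPQ]
    rw [h1, h2, h3]
    nlinarith [h5', h6']
end
end

section
/- (Lemma 2, Kullback–Leibler decomposition.) Let P be a test-channel pair and let Q be an auxiliary triple with strictly positive components. Then F_s(P,Q) − F_s(P) = Σ_{u₁,u₂} p(u₁,u₂) · D_KL(p(·|u₁,u₂) ‖ q(·|u₁,u₂)) + s₁ · D_KL(p(u₁,u₂) ‖ q(u₁,u₂)) + s₂ · D_KL(p(u₂) ‖ q(u₂)), where p(·|u₁,u₂) is the induced conditional pmf of X given (u₁,u₂) (defined arbitrarily when p(u₁,u₂)=0), and D_KL denotes the Kullback–Leibler divergence between pmfs on a finite set. -/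
open Finset Real

noncomputable section

variable {X Y1 Y2 U1 U2 : Type} [Fintype X] [Fintype Y1] [Fintype Y2] [Fintype U1] [Fintype U2]

private lemma negMulLog_mul'' (x y : ℝ) :
    Real.negMulLog (x * y) = y * Real.negMulLog x + x * Real.negMulLog y := by
  rcases eq_or_ne x 0 with h | h
  · simp [h, Real.negMulLog]
  rcases eq_or_ne y 0 with h' | h'
  · simp [h', Real.negMulLog]
  simp only [Real.negMulLog, Real.log_mul h h']
  ring

private lemma KL_eq_of_pos {α : Type} [Fintype α] (r q : α → ℝ)
    (hr : ∀ a, 0 ≤ r a) (hq : ∀ a, 0 < q a) :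
    KL r q = -(∑ a, Real.negMulLog (r a)) - ∑ a, r a * Real.log (q a) := by
  have h : ∀ a, r a * Real.log (r a / q a)
      = -Real.negMulLog (r a) - r a * Real.log (q a) := by
    intro a
    rcases eq_or_ne (r a) 0 with h0 | h0
    · simp [h0, Real.negMulLog]
    · rw [Real.log_div h0 (ne_of_gt (hq a))]
      simp only [Real.negMulLog]
      ring
  rw [KL, Finset.sum_congr rfl fun a _ => h a, Finset.sum_sub_distrib,
    Finset.sum_neg_distrib]

/-- **Lemma 2, Kullback–Leibler decomposition**: for a test-channel pair `P` and a strictly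
positive auxiliary triple `Q`,
`F_s(P,Q) − F_s(P) = Σ_{u₁,u₂} p(u₁,u₂) D_KL(p(·|u₁,u₂)‖q(·|u₁,u₂))
 + s₁ D_KL(p(u₁,u₂)‖q(u₁,u₂)) + s₂ D_KL(p(u₂)‖q(u₂))`,
where `p(·|u₁,u₂)` is the induced conditional pmf of `X` given `(u₁,u₂)`
(defined arbitrarily when `p(u₁,u₂) = 0`). -/
theorem ceo_KL_decomposition
    (pX : X → ℝ) (W1 : X → Y1 → ℝ) (W2 : X → Y2 → ℝ)
    (hpX : IsPmf pX) (hW1 : IsChan W1) (hW2 : IsChan W2)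
    (s1 s2 : ℝ) (hs1 : 0 < s1) (hs2 : 0 < s2)
    (p1 : Y1 → U1 → ℝ) (p2 : Y2 → U2 → ℝ) (hp1 : IsChan p1) (hp2 : IsChan p2)
    (qX : U1 × U2 → X → ℝ) (qUU : U1 × U2 → ℝ) (qU2 : U2 → ℝ)
    (hqX : IsChan qX) (hqUU : IsPmf qUU) (hqU2 : IsPmf qU2)
    (hqXpos : ∀ u x, 0 < qX u x) (hqUUpos : ∀ u, 0 < qUU u) (hqU2pos : ∀ u2, 0 < qU2 u2)
    (pcond : U1 × U2 → X → ℝ) (hpcond : ∀ u, IsPmf (pcond u))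
    (hpcondEq : ∀ u, pUU pX W1 W2 p1 p2 u ≠ 0 →
      ∀ x, pcond u x = pUUX pX W1 W2 p1 p2 (u.1, u.2, x) / pUU pX W1 W2 p1 p2 u) :
    FsPQ s1 s2 pX W1 W2 p1 p2 qX qUU qU2 - Fs s1 s2 (ceoJoint pX W1 W2 p1 p2)
      = (∑ u : U1 × U2, pUU pX W1 W2 p1 p2 u * KL (pcond u) (qX u))
        + s1 * KL (pUU pX W1 W2 p1 p2) qUU
        + s2 * KL (pU2m pX W2 p2) qU2 := by
  classical
  -- abbreviations for the joint and sum facts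
  have hW1s : ∀ x, ∑ y1, W1 x y1 = 1 := fun x => (hW1 x).2
  have hW2s : ∀ x, ∑ y2, W2 x y2 = 1 := fun x => (hW2 x).2
  have hp1s : ∀ y1, ∑ u1, p1 y1 u1 = 1 := fun y1 => (hp1 y1).2
  have hp2s : ∀ y2, ∑ u2, p2 y2 u2 = 1 := fun y2 => (hp2 y2).2
  have hpU1Xs : ∀ x, ∑ u1, pU1X W1 p1 x u1 = 1 := by
    intro x
    simp only [pU1X]
    rw [Finset.sum_comm]
    calc ∑ y1, ∑ u1, W1 x y1 * p1 y1 u1 = ∑ y1, W1 x y1 * ∑ u1, p1 y1 u1 := by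
          simp [Finset.mul_sum]
      _ = 1 := by simp [hp1s, hW1s x]
  have hpU2Xs : ∀ x, ∑ u2, pU2X W2 p2 x u2 = 1 := by
    intro x
    simp only [pU2X]
    rw [Finset.sum_comm]
    calc ∑ y2, ∑ u2, W2 x y2 * p2 y2 u2 = ∑ y2, W2 x y2 * ∑ u2, p2 y2 u2 := by
          simp [Finset.mul_sum]
      _ = 1 := by simp [hp2s, hW2s x]
  have hpU1Xnn : ∀ x u1, 0 ≤ pU1X W1 p1 x u1 := fun x u1 =>
    Finset.sum_nonneg fun y1 _ => mul_nonneg ((hW1 x).1 y1) ((hp1 y1).1 u1)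
  have hpU2Xnn : ∀ x u2, 0 ≤ pU2X W2 p2 x u2 := fun x u2 =>
    Finset.sum_nonneg fun y2 _ => mul_nonneg ((hW2 x).1 y2) ((hp2 y2).1 u2)
  have hPXUnn : ∀ u1 u2 x, 0 ≤ pUUX pX W1 W2 p1 p2 (u1, u2, x) := fun u1 u2 x =>
    mul_nonneg (mul_nonneg (hpX.1 x) (hpU1Xnn x u1)) (hpU2Xnn x u2)
  have hPUUnn : ∀ u : U1 × U2, 0 ≤ pUU pX W1 W2 p1 p2 u := fun u =>
    Finset.sum_nonneg fun x _ => hPXUnn u.1 u.2 x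
  have hpY2mnn : ∀ y2, 0 ≤ pY2m pX W2 y2 := fun y2 =>
    Finset.sum_nonneg fun x _ => mul_nonneg (hpX.1 x) ((hW2 x).1 y2)
  have hPU2nn : ∀ u2, 0 ≤ pU2m pX W2 p2 u2 := fun u2 =>
    Finset.sum_nonneg fun y2 _ => mul_nonneg (hpY2mnn y2) ((hp2 y2).1 u2)
  -- marginal identifications
  have hmXU : ∀ x u1 u2, mXU (ceoJoint pX W1 W2 p1 p2) (x, u1, u2)
      = pUUX pX W1 W2 p1 p2 (u1, u2, x) := by
    intro x u1 u2
    simp only [mXU, ceoJoint, pUUX, pU1X, pU2X, Finset.mul_sum, Finset.sum_mul]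
    rw [Finset.sum_comm]
    exact Finset.sum_congr rfl fun y2 _ => Finset.sum_congr rfl fun y1 _ => by ring
  have hmU12 : ∀ u : U1 × U2, mU12 (ceoJoint pX W1 W2 p1 p2) u = pUU pX W1 W2 p1 p2 u := by
    intro u
    simp only [mU12, pUU]
    exact Finset.sum_congr rfl fun x _ => hmXU x u.1 u.2
  have hmU2 : ∀ u2, mU2 (ceoJoint pX W1 W2 p1 p2) u2 = pU2m pX W2 p2 u2 := by
    intro u2
    have h1 : mU2 (ceoJoint pX W1 W2 p1 p2) u2 = ∑ x, pX x * pU2X W2 p2 x u2 := by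
      simp only [mU2, hmU12, pUU, pUUX]
      rw [Finset.sum_comm]
      refine Finset.sum_congr rfl fun x _ => ?_
      calc ∑ u1, pX x * pU1X W1 p1 x u1 * pU2X W2 p2 x u2
          = (∑ u1, pU1X W1 p1 x u1) * (pX x * pU2X W2 p2 x u2) := by
            rw [Finset.sum_mul]
            exact Finset.sum_congr rfl fun u1 _ => by ring
        _ = pX x * pU2X W2 p2 x u2 := by rw [hpU1Xs x, one_mul]
    rw [h1]
    simp only [pU2m, pY2m, pU2X, Finset.mul_sum, Finset.sum_mul]
    rw [Finset.sum_comm]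
    exact Finset.sum_congr rfl fun a _ => Finset.sum_congr rfl fun b _ => by ring
  -- `g` is the marginal p(y1, u2)
  set g : Y1 → U2 → ℝ := fun y1 u2 => ∑ x, pX x * W1 x y1 * pU2X W2 p2 x u2 with hg
  have hmY1U : ∀ y1 u1 u2, mY1U (ceoJoint pX W1 W2 p1 p2) (y1, u1, u2)
      = p1 y1 u1 * g y1 u2 := by
    intro y1 u1 u2
    simp only [mY1U, ceoJoint, hg, pU2X, Finset.mul_sum, Finset.sum_mul]
    exact Finset.sum_congr rfl fun x _ => Finset.sum_congr rfl fun y2 _ => by ring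
  have hmY1U2 : ∀ y1 u2, mY1U2 (ceoJoint pX W1 W2 p1 p2) (y1, u2) = g y1 u2 := by
    intro y1 u2
    simp only [mY1U2, hmY1U]
    rw [← Finset.sum_mul, hp1s, one_mul]
  have hgsum : ∀ y1, ∑ u2, g y1 u2 = pY1m pX W1 y1 := by
    intro y1
    simp only [hg]
    rw [Finset.sum_comm]
    simp only [pY1m]
    refine Finset.sum_congr rfl fun x _ => ?_
    rw [← Finset.mul_sum, hpU2Xs, mul_one]
  have hmY2U2 : ∀ y2 u2, mY2U2 (ceoJoint pX W1 W2 p1 p2) (y2, u2)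
      = p2 y2 u2 * pY2m pX W2 y2 := by
    intro y2 u2
    simp only [mY2U2, ceoJoint, pY2m]
    have h1 : ∀ x, (∑ y1, ∑ u1, pX x * W1 x y1 * W2 x y2 * p1 y1 u1 * p2 y2 u2)
        = p2 y2 u2 * (pX x * W2 x y2) := by
      intro x
      calc ∑ y1, ∑ u1, pX x * W1 x y1 * W2 x y2 * p1 y1 u1 * p2 y2 u2
          = ∑ y1, (pX x * W1 x y1 * W2 x y2 * p2 y2 u2) * ∑ u1, p1 y1 u1 := by
            refine Finset.sum_congr rfl fun y1 _ => ?_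
            rw [Finset.mul_sum]
            exact Finset.sum_congr rfl fun u1 _ => by ring
        _ = ∑ y1, pX x * W1 x y1 * W2 x y2 * p2 y2 u2 := by simp [hp1s]
        _ = (∑ y1, W1 x y1) * (pX x * W2 x y2 * p2 y2 u2) := by
            rw [Finset.sum_mul]
            exact Finset.sum_congr rfl fun y1 _ => by ring
        _ = p2 y2 u2 * (pX x * W2 x y2) := by rw [hW1s x]; ring
    rw [Finset.sum_congr rfl fun x _ => h1 x, ← Finset.mul_sum, Finset.mul_sum]
  have hmY2 : ∀ y2, mY2 (ceoJoint pX W1 W2 p1 p2) y2 = pY2m pX W2 y2 := by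
    intro y2
    simp only [mY2, hmY2U2]
    rw [← Finset.sum_mul, hp2s, one_mul]
  -- entropies in explicit form
  have hentXU : ent (mXU (ceoJoint pX W1 W2 p1 p2))
      = ∑ u1, ∑ u2, ∑ x, Real.negMulLog (pUUX pX W1 W2 p1 p2 (u1, u2, x)) := by
    rw [ent, Fintype.sum_prod_type, Finset.sum_comm, Fintype.sum_prod_type]
    exact Finset.sum_congr rfl fun u1 _ => Finset.sum_congr rfl fun u2 _ =>
      Finset.sum_congr rfl fun x _ => by rw [hmXU]
  have hentU12 : ent (mU12 (ceoJoint pX W1 W2 p1 p2))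
      = ∑ u1, ∑ u2, Real.negMulLog (pUU pX W1 W2 p1 p2 (u1, u2)) := by
    rw [ent, Fintype.sum_prod_type]
    exact Finset.sum_congr rfl fun u1 _ => Finset.sum_congr rfl fun u2 _ => by
      rw [hmU12]
  have hentU2 : ent (mU2 (ceoJoint pX W1 W2 p1 p2))
      = ∑ u2, Real.negMulLog (pU2m pX W2 p2 u2) := by
    rw [ent]
    exact Finset.sum_congr rfl fun u2 _ => by rw [hmU2]
  have hentY1U2g : ent (mY1U2 (ceoJoint pX W1 W2 p1 p2))
      = ∑ y1, ∑ u2, Real.negMulLog (g y1 u2) := by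
    rw [ent, Fintype.sum_prod_type]
    exact Finset.sum_congr rfl fun y1 _ => Finset.sum_congr rfl fun u2 _ => by
      rw [hmY1U2]
  have hT1 : ∑ u1, ∑ y1, p1 y1 u1 * pY1m pX W1 y1 * Real.log (p1 y1 u1)
      = -(∑ y1, ∑ u1, pY1m pX W1 y1 * Real.negMulLog (p1 y1 u1)) := by
    rw [Finset.sum_comm, ← Finset.sum_neg_distrib]
    refine Finset.sum_congr rfl fun y1 _ => ?_
    rw [← Finset.sum_neg_distrib]
    refine Finset.sum_congr rfl fun u1 _ => ?_
    simp only [Real.negMulLog]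
    ring
  have hentY1U : ent (mY1U (ceoJoint pX W1 W2 p1 p2))
      = ent (mY1U2 (ceoJoint pX W1 W2 p1 p2))
        - ∑ u1, ∑ y1, p1 y1 u1 * pY1m pX W1 y1 * Real.log (p1 y1 u1) := by
    rw [hentY1U2g, hT1, ent, Fintype.sum_prod_type]
    have step : ∀ y1 : Y1, (∑ u : U1 × U2,
          Real.negMulLog (mY1U (ceoJoint pX W1 W2 p1 p2) (y1, u)))
        = (∑ u1, pY1m pX W1 y1 * Real.negMulLog (p1 y1 u1))
          + ∑ u2, Real.negMulLog (g y1 u2) := by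
      intro y1
      rw [Fintype.sum_prod_type]
      calc ∑ u1, ∑ u2, Real.negMulLog (mY1U (ceoJoint pX W1 W2 p1 p2) (y1, u1, u2))
          = ∑ u1, ∑ u2, (g y1 u2 * Real.negMulLog (p1 y1 u1)
              + p1 y1 u1 * Real.negMulLog (g y1 u2)) := by
            exact Finset.sum_congr rfl fun u1 _ => Finset.sum_congr rfl fun u2 _ => by
              rw [hmY1U, negMulLog_mul'']
        _ = ∑ u1, (pY1m pX W1 y1 * Real.negMulLog (p1 y1 u1)
              + p1 y1 u1 * ∑ u2, Real.negMulLog (g y1 u2)) := by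
            refine Finset.sum_congr rfl fun u1 _ => ?_
            rw [Finset.sum_add_distrib, ← Finset.sum_mul, hgsum, ← Finset.mul_sum]
        _ = (∑ u1, pY1m pX W1 y1 * Real.negMulLog (p1 y1 u1))
              + ∑ u2, Real.negMulLog (g y1 u2) := by
            rw [Finset.sum_add_distrib, ← Finset.sum_mul, hp1s, one_mul]
    rw [Finset.sum_congr rfl fun y1 _ => step y1, Finset.sum_add_distrib]
    ring
  have hT2 : ∑ u2, ∑ y2, p2 y2 u2 * pY2m pX W2 y2 * Real.log (p2 y2 u2)
      = -(∑ y2, ∑ u2, pY2m pX W2 y2 * Real.negMulLog (p2 y2 u2)) := by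
    rw [Finset.sum_comm, ← Finset.sum_neg_distrib]
    refine Finset.sum_congr rfl fun y2 _ => ?_
    rw [← Finset.sum_neg_distrib]
    refine Finset.sum_congr rfl fun u2 _ => ?_
    simp only [Real.negMulLog]
    ring
  have hentY2m : ent (mY2 (ceoJoint pX W1 W2 p1 p2))
      = ∑ y2, Real.negMulLog (pY2m pX W2 y2) := by
    rw [ent]
    exact Finset.sum_congr rfl fun y2 _ => by rw [hmY2]
  have hentY2U2 : ent (mY2U2 (ceoJoint pX W1 W2 p1 p2))
      = ent (mY2 (ceoJoint pX W1 W2 p1 p2))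
        - ∑ u2, ∑ y2, p2 y2 u2 * pY2m pX W2 y2 * Real.log (p2 y2 u2) := by
    rw [hentY2m, hT2, ent, Fintype.sum_prod_type]
    calc ∑ y2, ∑ u2, Real.negMulLog (mY2U2 (ceoJoint pX W1 W2 p1 p2) (y2, u2))
        = ∑ y2, ∑ u2, (pY2m pX W2 y2 * Real.negMulLog (p2 y2 u2)
            + p2 y2 u2 * Real.negMulLog (pY2m pX W2 y2)) := by
          exact Finset.sum_congr rfl fun y2 _ => Finset.sum_congr rfl fun u2 _ => by
            rw [hmY2U2, negMulLog_mul'']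
      _ = ∑ y2, ((∑ u2, pY2m pX W2 y2 * Real.negMulLog (p2 y2 u2))
            + Real.negMulLog (pY2m pX W2 y2)) := by
          refine Finset.sum_congr rfl fun y2 _ => ?_
          rw [Finset.sum_add_distrib, ← Finset.sum_mul, hp2s, one_mul]
      _ = _ := by rw [Finset.sum_add_distrib]; ring
  -- the `T3` term
  have hT3 : ∑ u2, pU2m pX W2 p2 u2 * Real.log (pU2m pX W2 p2 u2)
      = -(∑ u2, Real.negMulLog (pU2m pX W2 p2 u2)) := by
    rw [← Finset.sum_neg_distrib]
    refine Finset.sum_congr rfl fun u2 _ => ?_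
    simp only [Real.negMulLog]
    ring
  -- the KL identities
  have hKLX : ∀ u : U1 × U2, pUU pX W1 W2 p1 p2 u * KL (pcond u) (qX u)
      = (∑ x, -Real.negMulLog (pUUX pX W1 W2 p1 p2 (u.1, u.2, x)))
        + Real.negMulLog (pUU pX W1 W2 p1 p2 u)
        - ∑ x, pUUX pX W1 W2 p1 p2 (u.1, u.2, x) * Real.log (qX u x) := by
    intro u
    rcases eq_or_ne (pUU pX W1 W2 p1 p2 u) 0 with h0 | h0
    · have hx0 : ∀ x, pUUX pX W1 W2 p1 p2 (u.1, u.2, x) = 0 := by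
        have h0' : ∑ x, pUUX pX W1 W2 p1 p2 (u.1, u.2, x) = 0 := h0
        intro x
        exact (Finset.sum_eq_zero_iff_of_nonneg
          (fun x _ => hPXUnn u.1 u.2 x)).mp h0' x (Finset.mem_univ x)
      simp [h0, hx0, Real.negMulLog]
    · have hpos : 0 < pUU pX W1 W2 p1 p2 u := (hPUUnn u).lt_of_ne (Ne.symm h0)
      have hterm : ∀ x, pUU pX W1 W2 p1 p2 u * (pcond u x * Real.log (pcond u x / qX u x))
          = pUUX pX W1 W2 p1 p2 (u.1, u.2, x) * Real.log (pUUX pX W1 W2 p1 p2 (u.1, u.2, x))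
            - pUUX pX W1 W2 p1 p2 (u.1, u.2, x) * Real.log (pUU pX W1 W2 p1 p2 u)
            - pUUX pX W1 W2 p1 p2 (u.1, u.2, x) * Real.log (qX u x) := by
        intro x
        rw [hpcondEq u h0 x]
        rcases eq_or_ne (pUUX pX W1 W2 p1 p2 (u.1, u.2, x)) 0 with hx | hx
        · simp [hx]
        · rw [Real.log_div (by positivity) (ne_of_gt (hqXpos u x)),
            Real.log_div hx (ne_of_gt hpos)]
          field_simp
      calc pUU pX W1 W2 p1 p2 u * KL (pcond u) (qX u)
          = ∑ x, pUU pX W1 W2 p1 p2 u * (pcond u x * Real.log (pcond u x / qX u x)) := by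
            rw [KL, Finset.mul_sum]
        _ = ∑ x, (pUUX pX W1 W2 p1 p2 (u.1, u.2, x)
              * Real.log (pUUX pX W1 W2 p1 p2 (u.1, u.2, x))
            - pUUX pX W1 W2 p1 p2 (u.1, u.2, x) * Real.log (pUU pX W1 W2 p1 p2 u)
            - pUUX pX W1 W2 p1 p2 (u.1, u.2, x) * Real.log (qX u x)) :=
            Finset.sum_congr rfl fun x _ => hterm x
        _ = _ := by
            rw [Finset.sum_sub_distrib, Finset.sum_sub_distrib, ← Finset.sum_mul]
            have h1 : (∑ x, pUUX pX W1 W2 p1 p2 (u.1, u.2, x)) = pUU pX W1 W2 p1 p2 u := rfl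
            have h2 : ∑ x, pUUX pX W1 W2 p1 p2 (u.1, u.2, x)
                * Real.log (pUUX pX W1 W2 p1 p2 (u.1, u.2, x))
                = ∑ x, -Real.negMulLog (pUUX pX W1 W2 p1 p2 (u.1, u.2, x)) :=
              Finset.sum_congr rfl fun x _ => by simp [Real.negMulLog]
            rw [h1, h2]
            simp only [Real.negMulLog]
            ring
  have hKLXsum : (∑ u : U1 × U2, pUU pX W1 W2 p1 p2 u * KL (pcond u) (qX u))
      = -(∑ u1, ∑ u2, ∑ x, Real.negMulLog (pUUX pX W1 W2 p1 p2 (u1, u2, x)))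
        + (∑ u1, ∑ u2, Real.negMulLog (pUU pX W1 W2 p1 p2 (u1, u2)))
        - ∑ u1, ∑ u2, ∑ x, pUUX pX W1 W2 p1 p2 (u1, u2, x) * Real.log (qX (u1, u2) x) := by
    calc (∑ u : U1 × U2, pUU pX W1 W2 p1 p2 u * KL (pcond u) (qX u))
        = ∑ u : U1 × U2, ((∑ x, -Real.negMulLog (pUUX pX W1 W2 p1 p2 (u.1, u.2, x)))
            + Real.negMulLog (pUU pX W1 W2 p1 p2 u)
            - ∑ x, pUUX pX W1 W2 p1 p2 (u.1, u.2, x) * Real.log (qX u x)) :=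
          Finset.sum_congr rfl fun u _ => hKLX u
      _ = (∑ u : U1 × U2, ∑ x, -Real.negMulLog (pUUX pX W1 W2 p1 p2 (u.1, u.2, x)))
            + (∑ u : U1 × U2, Real.negMulLog (pUU pX W1 W2 p1 p2 u))
            - ∑ u : U1 × U2, ∑ x, pUUX pX W1 W2 p1 p2 (u.1, u.2, x) * Real.log (qX u x) := by
          rw [Finset.sum_sub_distrib, Finset.sum_add_distrib]
      _ = _ := by
          rw [Fintype.sum_prod_type, Fintype.sum_prod_type, Fintype.sum_prod_type]
          congr 2
          rw [← Finset.sum_neg_distrib]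
          exact Finset.sum_congr rfl fun u1 _ => by
            rw [← Finset.sum_neg_distrib]
            exact Finset.sum_congr rfl fun u2 _ => by
              rw [← Finset.sum_neg_distrib]
  have hKLUU : KL (pUU pX W1 W2 p1 p2) qUU
      = -(∑ u1, ∑ u2, Real.negMulLog (pUU pX W1 W2 p1 p2 (u1, u2)))
        - ∑ u1, ∑ u2, pUU pX W1 W2 p1 p2 (u1, u2) * Real.log (qUU (u1, u2)) := by
    rw [KL_eq_of_pos _ _ hPUUnn hqUUpos, Fintype.sum_prod_type, Fintype.sum_prod_type]
  have hKLU2 : KL (pU2m pX W2 p2) qU2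
      = -(∑ u2, Real.negMulLog (pU2m pX W2 p2 u2))
        - ∑ u2, pU2m pX W2 p2 u2 * Real.log (qU2 u2) :=
    KL_eq_of_pos _ _ hPU2nn hqU2pos
  -- final assembly
  rw [hKLXsum, hKLUU, hKLU2]
  simp only [FsPQ, Fs, condHX, I1c, I2m]
  rw [hentXU, hentU12, hentU2, hentY1U, hentY2U2, hT3]
  ring
end
end

section
/- (Lemma 3, optimal P_{U₁|Y₁} for fixed Q and fixed P_{U₂|Y₂}.) Fix s₁,s₂>0, an auxiliary triple Q with strictly positive components, and a conditional pmf P_{U₂|Y₂}; assume p(y₁)>0 for all y₁. Define ρ₁(u₁,y₁) := (1/s₁) Σ_{u₂,x} p(x|y₁) p(u₂|x) log q(x|u₁,u₂) + Σ_{u₂,x} p(x|y₁) p(u₂|x) log q(u₁,u₂), where p(u₂|x)=Σ_{y₂}p(u₂|y₂)p(y₂|x). Then the map P_{U₁|Y₁} ↦ F_s((P_{U₁|Y₁},P_{U₂|Y₂}),Q) attains its minimum over conditional pmfs from 𝒴₁ to 𝒰₁ at the unique point given by p(u₁|y₁) = exp(ρ₁(u₁,y₁)) / Σ_{u₁'}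 exp(ρ₁(u₁',y₁)). -/
open Finset Real

noncomputable section

variable {X Y1 Y2 U1 U2 : Type} [Fintype X] [Fintype Y1] [Fintype Y2] [Fintype U1] [Fintype U2]

/-- The exponent `ρ₁(u₁,y₁)` of Lemma 3:
`ρ₁(u₁,y₁) = (1/s₁) Σ_{u₂,x} p(x|y₁) p(u₂|x) log q(x|u₁,u₂)
           + Σ_{u₂,x} p(x|y₁) p(u₂|x) log q(u₁,u₂)`,
with `p(x|y₁) = p(x)p(y₁|x)/p(y₁)` and `p(u₂|x) = Σ_{y₂} p(u₂|y₂)p(y₂|x)`. -/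
def rho1 (s1 : ℝ) (pX : X → ℝ) (W1 : X → Y1 → ℝ) (W2 : X → Y2 → ℝ)
    (p2 : Y2 → U2 → ℝ) (qX : U1 × U2 → X → ℝ) (qUU : U1 × U2 → ℝ)
    (u1 : U1) (y1 : Y1) : ℝ :=
  (1 / s1) * (∑ u2, ∑ x, (pX x * W1 x y1 / pY1m pX W1 y1) * pU2X W2 p2 x u2
      * Real.log (qX (u1, u2) x))
  + (∑ u2, ∑ x, (pX x * W1 x y1 / pY1m pX W1 y1) * pU2X W2 p2 x u2
      * Real.log (qUU (u1, u2)))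

/-! ### Auxiliary lemmas for Lemma 3 -/

section CeoAux

lemma ceo_gibbs_pt {v w : ℝ} (hv : 0 ≤ v) (hw : 0 < w) :
    v - w ≤ v * Real.log v - v * Real.log w := by
  rcases eq_or_lt_of_le hv with h | h
  · simp [← h]; positivity
  · have hlog : Real.log (w / v) ≤ w / v - 1 := Real.log_le_sub_one_of_pos (by positivity)
    have : v * Real.log (w / v) ≤ v * (w / v - 1) := by nlinarith
    rw [Real.log_div (ne_of_gt hw) (ne_of_gt h)] at this
    have hv' : v * (w / v - 1) = w - v := by field_simp
    nlinarith

lemma ceo_gibbs_pt_eq {v w : ℝ} (hv : 0 ≤ v) (hw : 0 < w)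
    (heq : v - w = v * Real.log v - v * Real.log w) : v = w := by
  rcases eq_or_lt_of_le hv with h | h
  · exfalso; simp [← h] at heq; linarith
  · by_contra hne
    have hne' : w / v ≠ 1 := by
      intro hh; apply hne; field_simp at hh; linarith
    have hlog : Real.log (w / v) < w / v - 1 :=
      Real.log_lt_sub_one_of_pos (by positivity) hne'
    have : v * Real.log (w / v) < v * (w / v - 1) := by nlinarith
    rw [Real.log_div (ne_of_gt hw) (ne_of_gt h)] at this
    have hv' : v * (w / v - 1) = w - v := by field_simp
    nlinarith

lemma ceo_gibbs_sum {α : Type} [Fintype α] {v w : α → ℝ} (hv : IsPmf v)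
    (hw : ∀ a, 0 < w a) (hw1 : ∑ a, w a = 1) :
    0 ≤ ∑ a, (v a * Real.log (v a) - v a * Real.log (w a)) ∧
    ((∑ a, (v a * Real.log (v a) - v a * Real.log (w a))) = 0 → v = w) := by
  have key : ∀ a, v a - w a ≤ v a * Real.log (v a) - v a * Real.log (w a) :=
    fun a => ceo_gibbs_pt (hv.1 a) (hw a)
  have hsum0 : ∑ a, (v a - w a) = 0 := by
    rw [Finset.sum_sub_distrib, hv.2, hw1]; ring
  constructor
  · calc (0:ℝ) = ∑ a, (v a - w a) := hsum0.symm
      _ ≤ _ := Finset.sum_le_sum (fun a _ => key a)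
  · intro h0
    have heach : ∀ a ∈ Finset.univ, v a - w a = v a * Real.log (v a) - v a * Real.log (w a) := by
      apply Finset.sum_eq_sum_iff_of_le (fun a _ => key a) |>.mp
      rw [hsum0, h0]
    funext a
    exact ceo_gibbs_pt_eq (hv.1 a) (hw a) (heach a (Finset.mem_univ a))

lemma ceo_sum_swap4 {A B C D : Type} [Fintype A] [Fintype B] [Fintype C] [Fintype D]
    (f : A → B → C → D → ℝ) :
    ∑ a, ∑ b, ∑ c, ∑ d, f a b c d = ∑ d, ∑ a, ∑ b, ∑ c, f a b c d := by
  calc ∑ a, ∑ b, ∑ c, ∑ d, f a b c d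
      = ∑ a, ∑ b, ∑ d, ∑ c, f a b c d :=
        Finset.sum_congr rfl fun a _ => Finset.sum_congr rfl fun b _ => Finset.sum_comm
    _ = ∑ a, ∑ d, ∑ b, ∑ c, f a b c d :=
        Finset.sum_congr rfl fun a _ => Finset.sum_comm
    _ = ∑ d, ∑ a, ∑ b, ∑ c, f a b c d := Finset.sum_comm

lemma ceo_exch {U1 U2 X Y1 : Type} [Fintype U1] [Fintype U2] [Fintype X] [Fintype Y1]
    (c : X → ℝ) (d : X → Y1 → ℝ) (p1 : Y1 → U1 → ℝ) (e : X → U2 → ℝ) (L : U1 → U2 → X → ℝ) :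
    ∑ u1, ∑ u2, ∑ x, (c x * (∑ y1, d x y1 * p1 y1 u1) * e x u2) * L u1 u2 x
    = ∑ y1, ∑ u1, p1 y1 u1 * ∑ u2, ∑ x, c x * d x y1 * e x u2 * L u1 u2 x := by
  have lhs : ∑ u1, ∑ u2, ∑ x, (c x * (∑ y1, d x y1 * p1 y1 u1) * e x u2) * L u1 u2 x
      = ∑ u1, ∑ u2, ∑ x, ∑ y1, c x * d x y1 * p1 y1 u1 * e x u2 * L u1 u2 x := by
    refine Finset.sum_congr rfl fun u1 _ => Finset.sum_congr rfl fun u2 _ =>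
      Finset.sum_congr rfl fun x _ => ?_
    rw [Finset.mul_sum, Finset.sum_mul, Finset.sum_mul]
    exact Finset.sum_congr rfl fun y1 _ => by ring
  rw [lhs, ceo_sum_swap4]
  refine Finset.sum_congr rfl fun y1 _ => Finset.sum_congr rfl fun u1 _ => ?_
  rw [Finset.mul_sum]
  refine Finset.sum_congr rfl fun u2 _ => ?_
  rw [Finset.mul_sum]
  exact Finset.sum_congr rfl fun x _ => by ring

/-- Decomposition of `F_s(P,Q)` into a `p₁`-independent constant plus
`s₁ ∑_{y₁,u₁} p(y₁) (p(u₁|y₁) log p(u₁|y₁) − p(u₁|y₁) ρ₁(u₁,y₁))`. -/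
lemma ceo_FsPQ_decomp {X Y1 Y2 U1 U2 : Type}
    [Fintype X] [Fintype Y1] [Fintype Y2] [Fintype U1] [Fintype U2]
    (pX : X → ℝ) (W1 : X → Y1 → ℝ) (W2 : X → Y2 → ℝ)
    (s1 s2 : ℝ) (hs1 : s1 ≠ 0)
    (qX : U1 × U2 → X → ℝ) (qUU : U1 × U2 → ℝ) (qU2 : U2 → ℝ)
    (p2 : Y2 → U2 → ℝ) (hY1pos : ∀ y1, 0 < pY1m pX W1 y1)
    (p1 : Y1 → U1 → ℝ) :
    FsPQ s1 s2 pX W1 W2 p1 p2 qX qUU qU2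
    = (- s2 * (∑ u2, pU2m pX W2 p2 u2 * Real.log (qU2 u2))
       + s2 * (∑ u2, ∑ y2, p2 y2 u2 * pY2m pX W2 y2 * Real.log (p2 y2 u2))
       + s1 * (∑ u2, pU2m pX W2 p2 u2 * Real.log (pU2m pX W2 p2 u2)))
      + s1 * ∑ y1, ∑ u1, pY1m pX W1 y1 *
          (p1 y1 u1 * Real.log (p1 y1 u1)
            - p1 y1 u1 * rho1 s1 pX W1 W2 p2 qX qUU u1 y1) := by
  have e1 : ∑ u1, ∑ u2, ∑ x, pUUX pX W1 W2 p1 p2 (u1, u2, x) * Real.log (qX (u1, u2) x)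
      = ∑ y1, ∑ u1, p1 y1 u1 * ∑ u2, ∑ x, pX x * W1 x y1 * pU2X W2 p2 x u2
          * Real.log (qX (u1, u2) x) := by
    simpa [pUUX, pU1X] using
      ceo_exch pX W1 p1 (pU2X W2 p2) (fun u1 u2 x => Real.log (qX (u1, u2) x))
  have e2 : ∑ u1, ∑ u2, pUU pX W1 W2 p1 p2 (u1, u2) * Real.log (qUU (u1, u2))
      = ∑ y1, ∑ u1, p1 y1 u1 * ∑ u2, ∑ x, pX x * W1 x y1 * pU2X W2 p2 x u2
          * Real.log (qUU (u1, u2)) := by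
    have : ∑ u1, ∑ u2, pUU pX W1 W2 p1 p2 (u1, u2) * Real.log (qUU (u1, u2))
        = ∑ u1, ∑ u2, ∑ x, (pX x * (∑ y1, W1 x y1 * p1 y1 u1) * pU2X W2 p2 x u2)
            * Real.log (qUU (u1, u2)) := by
      refine Finset.sum_congr rfl fun u1 _ => Finset.sum_congr rfl fun u2 _ => ?_
      simp [pUU, pUUX, pU1X, Finset.sum_mul]
    rw [this]
    exact ceo_exch pX W1 p1 (pU2X W2 p2) (fun u1 u2 x => Real.log (qUU (u1, u2)))
  have e4 : ∑ u1, ∑ y1, p1 y1 u1 * pY1m pX W1 y1 * Real.log (p1 y1 u1)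
      = ∑ y1, ∑ u1, p1 y1 u1 * pY1m pX W1 y1 * Real.log (p1 y1 u1) := Finset.sum_comm
  have hrho : ∀ u1 y1, pY1m pX W1 y1 * rho1 s1 pX W1 W2 p2 qX qUU u1 y1
      = (1 / s1) * (∑ u2, ∑ x, pX x * W1 x y1 * pU2X W2 p2 x u2 * Real.log (qX (u1, u2) x))
        + ∑ u2, ∑ x, pX x * W1 x y1 * pU2X W2 p2 x u2 * Real.log (qUU (u1, u2)) := by
    intro u1 y1
    have hp : pY1m pX W1 y1 ≠ 0 := (hY1pos y1).ne'
    have hd : ∀ (L : U2 → X → ℝ),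
        ∑ u2, ∑ x, (pX x * W1 x y1 / pY1m pX W1 y1) * pU2X W2 p2 x u2 * L u2 x
        = (∑ u2, ∑ x, pX x * W1 x y1 * pU2X W2 p2 x u2 * L u2 x) / pY1m pX W1 y1 := by
      intro L
      rw [Finset.sum_div]
      refine Finset.sum_congr rfl fun u2 _ => ?_
      rw [Finset.sum_div]
      exact Finset.sum_congr rfl fun x _ => by ring
    unfold rho1
    rw [hd (fun u2 x => Real.log (qX (u1, u2) x)), hd (fun u2 x => Real.log (qUU (u1, u2)))]
    field_simp
  have main : s1 * ∑ y1, ∑ u1, pY1m pX W1 y1 *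
        (p1 y1 u1 * Real.log (p1 y1 u1) - p1 y1 u1 * rho1 s1 pX W1 W2 p2 qX qUU u1 y1)
      = -(∑ y1, ∑ u1, p1 y1 u1 * ∑ u2, ∑ x, pX x * W1 x y1 * pU2X W2 p2 x u2
            * Real.log (qX (u1, u2) x))
        - s1 * (∑ y1, ∑ u1, p1 y1 u1 * ∑ u2, ∑ x, pX x * W1 x y1 * pU2X W2 p2 x u2
            * Real.log (qUU (u1, u2)))
        + s1 * (∑ y1, ∑ u1, p1 y1 u1 * pY1m pX W1 y1 * Real.log (p1 y1 u1)) := by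
    have step : ∀ y1 u1, s1 * (pY1m pX W1 y1 *
          (p1 y1 u1 * Real.log (p1 y1 u1) - p1 y1 u1 * rho1 s1 pX W1 W2 p2 qX qUU u1 y1))
        = -(p1 y1 u1 * ∑ u2, ∑ x, pX x * W1 x y1 * pU2X W2 p2 x u2
              * Real.log (qX (u1, u2) x))
          - s1 * (p1 y1 u1 * ∑ u2, ∑ x, pX x * W1 x y1 * pU2X W2 p2 x u2
              * Real.log (qUU (u1, u2)))
          + s1 * (p1 y1 u1 * pY1m pX W1 y1 * Real.log (p1 y1 u1)) := by
      intro y1 u1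
      have h0 : pY1m pX W1 y1 *
            (p1 y1 u1 * Real.log (p1 y1 u1) - p1 y1 u1 * rho1 s1 pX W1 W2 p2 qX qUU u1 y1)
          = p1 y1 u1 * pY1m pX W1 y1 * Real.log (p1 y1 u1)
            - p1 y1 u1 * (pY1m pX W1 y1 * rho1 s1 pX W1 W2 p2 qX qUU u1 y1) := by ring
      rw [h0, hrho u1 y1]
      field_simp
      ring
    calc s1 * ∑ y1, ∑ u1, pY1m pX W1 y1 *
          (p1 y1 u1 * Real.log (p1 y1 u1) - p1 y1 u1 * rho1 s1 pX W1 W2 p2 qX qUU u1 y1)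
        = ∑ y1, ∑ u1, (-(p1 y1 u1 * ∑ u2, ∑ x, pX x * W1 x y1 * pU2X W2 p2 x u2
              * Real.log (qX (u1, u2) x))
            - s1 * (p1 y1 u1 * ∑ u2, ∑ x, pX x * W1 x y1 * pU2X W2 p2 x u2
              * Real.log (qUU (u1, u2)))
            + s1 * (p1 y1 u1 * pY1m pX W1 y1 * Real.log (p1 y1 u1))) := by
          rw [Finset.mul_sum]
          refine Finset.sum_congr rfl fun y1 _ => ?_
          rw [Finset.mul_sum]
          exact Finset.sum_congr rfl fun u1 _ => step y1 u1
      _ = _ := by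
          simp [Finset.sum_add_distrib, Finset.sum_sub_distrib, Finset.mul_sum]
  unfold FsPQ
  rw [e1, e2, e4, main]
  ring

end CeoAux
/-- **Lemma 3, optimal `P_{U₁|Y₁}` for fixed `Q` and fixed `P_{U₂|Y₂}`**:
the minimum of `P_{U₁|Y₁} ↦ F_s((P_{U₁|Y₁},P_{U₂|Y₂}),Q)` over channels from `Y₁` to `U₁`
is attained at the unique point `p(u₁|y₁) = exp ρ₁(u₁,y₁) / Σ_{u₁'} exp ρ₁(u₁',y₁)`. -/
theorem ceo_optimal_P1_for_fixed_Q
    (pX : X → ℝ) (W1 : X → Y1 → ℝ) (W2 : X → Y2 → ℝ)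
    (hpX : IsPmf pX) (hW1 : IsChan W1) (hW2 : IsChan W2)
    (s1 s2 : ℝ) (hs1 : 0 < s1) (hs2 : 0 < s2)
    (qX : U1 × U2 → X → ℝ) (qUU : U1 × U2 → ℝ) (qU2 : U2 → ℝ)
    (hqX : IsChan qX) (hqUU : IsPmf qUU) (hqU2 : IsPmf qU2)
    (hqXpos : ∀ u x, 0 < qX u x) (hqUUpos : ∀ u, 0 < qUU u) (hqU2pos : ∀ u2, 0 < qU2 u2)
    (p2 : Y2 → U2 → ℝ) (hp2 : IsChan p2)
    (hY1pos : ∀ y1, 0 < pY1m pX W1 y1)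
    (p1opt : Y1 → U1 → ℝ)
    (hp1opt : ∀ y1 u1, p1opt y1 u1
      = Real.exp (rho1 s1 pX W1 W2 p2 qX qUU u1 y1)
        / ∑ u1' : U1, Real.exp (rho1 s1 pX W1 W2 p2 qX qUU u1' y1)) :
    (∀ p1 : Y1 → U1 → ℝ, IsChan p1 →
      FsPQ s1 s2 pX W1 W2 p1opt p2 qX qUU qU2 ≤ FsPQ s1 s2 pX W1 W2 p1 p2 qX qUU qU2) ∧
    (∀ p1 : Y1 → U1 → ℝ, IsChan p1 →
      FsPQ s1 s2 pX W1 W2 p1 p2 qX qUU qU2 = FsPQ s1 s2 pX W1 W2 p1opt p2 qX qUU qU2 →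
      p1 = p1opt) := by
  have key : ∀ p1 : Y1 → U1 → ℝ, IsChan p1 →
      (FsPQ s1 s2 pX W1 W2 p1opt p2 qX qUU qU2 ≤ FsPQ s1 s2 pX W1 W2 p1 p2 qX qUU qU2 ∧
       (FsPQ s1 s2 pX W1 W2 p1 p2 qX qUU qU2 = FsPQ s1 s2 pX W1 W2 p1opt p2 qX qUU qU2 →
        p1 = p1opt)) := by
    intro p1 hchan
    by_cases hY : Nonempty Y1
    · obtain ⟨y0⟩ := hY
      have hU1 : Nonempty U1 := by
        by_contra h
        rw [not_nonempty_iff] at h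
        have h2 := (hchan y0).2
        simp [Finset.univ_eq_empty] at h2
      haveI := hU1
      have hZpos : ∀ y1, 0 < ∑ u1' : U1, Real.exp (rho1 s1 pX W1 W2 p2 qX qUU u1' y1) :=
        fun y1 => Finset.sum_pos (fun _ _ => Real.exp_pos _) Finset.univ_nonempty
      have hoptpos : ∀ y1 u1, 0 < p1opt y1 u1 := by
        intro y1 u1
        rw [hp1opt]
        exact div_pos (Real.exp_pos _) (hZpos y1)
      have hoptsum : ∀ y1, ∑ u1, p1opt y1 u1 = 1 := by
        intro y1
        simp only [hp1opt]
        rw [← Finset.sum_div, div_self (hZpos y1).ne']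
      have hlogopt : ∀ y1 u1, rho1 s1 pX W1 W2 p2 qX qUU u1 y1
          = Real.log (p1opt y1 u1)
            + Real.log (∑ u1' : U1, Real.exp (rho1 s1 pX W1 W2 p2 qX qUU u1' y1)) := by
        intro y1 u1
        rw [hp1opt, Real.log_div (Real.exp_ne_zero _) (hZpos y1).ne', Real.log_exp]
        ring
      have hinner : ∀ (v : U1 → ℝ) (y1 : Y1), (∑ u1, v u1) = 1 →
          ∑ u1, (v u1 * Real.log (v u1) - v u1 * rho1 s1 pX W1 W2 p2 qX qUU u1 y1)
          = (∑ u1, (v u1 * Real.log (v u1) - v u1 * Real.log (p1opt y1 u1)))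
            - Real.log (∑ u1' : U1, Real.exp (rho1 s1 pX W1 W2 p2 qX qUU u1' y1)) := by
        intro v y1 hv
        have h1 : ∀ u1, v u1 * Real.log (v u1) - v u1 * rho1 s1 pX W1 W2 p2 qX qUU u1 y1
            = (v u1 * Real.log (v u1) - v u1 * Real.log (p1opt y1 u1))
              - v u1 * Real.log (∑ u1' : U1, Real.exp (rho1 s1 pX W1 W2 p2 qX qUU u1' y1)) := by
          intro u1; rw [hlogopt y1 u1]; ring
        rw [Finset.sum_congr rfl (fun u1 _ => h1 u1), Finset.sum_sub_distrib,
          ← Finset.sum_mul, hv, one_mul]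
      set g : Y1 → ℝ := fun y1 =>
        ∑ u1, (p1 y1 u1 * Real.log (p1 y1 u1) - p1 y1 u1 * Real.log (p1opt y1 u1)) with hg
      have per : ∀ y1,
          (∑ u1, pY1m pX W1 y1 * (p1 y1 u1 * Real.log (p1 y1 u1)
              - p1 y1 u1 * rho1 s1 pX W1 W2 p2 qX qUU u1 y1))
          - (∑ u1, pY1m pX W1 y1 * (p1opt y1 u1 * Real.log (p1opt y1 u1)
              - p1opt y1 u1 * rho1 s1 pX W1 W2 p2 qX qUU u1 y1))
          = pY1m pX W1 y1 * g y1 := by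
        intro y1
        rw [← Finset.mul_sum, ← Finset.mul_sum, hinner (p1 y1) y1 (hchan y1).2,
          hinner (p1opt y1) y1 (hoptsum y1)]
        have h0 : ∑ u1, (p1opt y1 u1 * Real.log (p1opt y1 u1)
            - p1opt y1 u1 * Real.log (p1opt y1 u1)) = 0 := by simp
        rw [h0, hg]
        ring
      have hdiff : FsPQ s1 s2 pX W1 W2 p1 p2 qX qUU qU2
          - FsPQ s1 s2 pX W1 W2 p1opt p2 qX qUU qU2
          = s1 * ∑ y1, pY1m pX W1 y1 * g y1 := by
        rw [ceo_FsPQ_decomp pX W1 W2 s1 s2 hs1.ne' qX qUU qU2 p2 hY1pos p1,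
          ceo_FsPQ_decomp pX W1 W2 s1 s2 hs1.ne' qX qUU qU2 p2 hY1pos p1opt]
        have hsplit : ∑ y1, pY1m pX W1 y1 * g y1
            = (∑ y1, ∑ u1, pY1m pX W1 y1 * (p1 y1 u1 * Real.log (p1 y1 u1)
                - p1 y1 u1 * rho1 s1 pX W1 W2 p2 qX qUU u1 y1))
              - ∑ y1, ∑ u1, pY1m pX W1 y1 * (p1opt y1 u1 * Real.log (p1opt y1 u1)
                - p1opt y1 u1 * rho1 s1 pX W1 W2 p2 qX qUU u1 y1) := by
          rw [← Finset.sum_sub_distrib]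
          exact (Finset.sum_congr rfl fun y1 _ => (per y1).symm)
        rw [hsplit]
        ring
      have hg0 : ∀ y1, 0 ≤ g y1 := fun y1 =>
        (ceo_gibbs_sum (hchan y1) (hoptpos y1) (hoptsum y1)).1
      have hsum0 : 0 ≤ ∑ y1, pY1m pX W1 y1 * g y1 :=
        Finset.sum_nonneg fun y1 _ => mul_nonneg (hY1pos y1).le (hg0 y1)
      constructor
      · nlinarith [hdiff, hsum0, mul_nonneg hs1.le hsum0]
      · intro heq
        have hz : ∑ y1, pY1m pX W1 y1 * g y1 = 0 := by
          have : s1 * ∑ y1, pY1m pX W1 y1 * g y1 = 0 := by rw [← hdiff]; linarith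
          exact (mul_eq_zero.mp this).resolve_left hs1.ne'
        have heach : ∀ y1 ∈ Finset.univ, pY1m pX W1 y1 * g y1 = 0 :=
          (Finset.sum_eq_zero_iff_of_nonneg
            (fun y1 _ => mul_nonneg (hY1pos y1).le (hg0 y1))).mp hz
        funext y1
        have hgy : g y1 = 0 :=
          (mul_eq_zero.mp (heach y1 (Finset.mem_univ y1))).resolve_left (hY1pos y1).ne'
        exact (ceo_gibbs_sum (hchan y1) (hoptpos y1) (hoptsum y1)).2 hgy
    · have hpe : p1 = p1opt := funext fun y1 => absurd ⟨y1⟩ hY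
      exact ⟨le_of_eq (by rw [hpe]), fun _ => hpe⟩
  exact ⟨fun p1 h => (key p1 h).1, fun p1 h => (key p1 h).2⟩
end
end

section
/- (Lemma 3, fixed-point characterization of the optimal P_{U₂|Y₂} for fixed Q and fixed P_{U₁|Y₁}.) Fix s₁,s₂>0, an auxiliary triple Q with strictly positive components, and a conditional pmf P_{U₁|Y₁}; assume p(y₂)>0 for all y₂. For a conditional pmf P_{U₂|Y₂} with strictly positive entries and induced marginal p(u₂)=Σ_{y₂}p(y₂)p(u₂|y₂), define ρ₂(u₂,y₂) := (1/s₂) Σ_{u₁,x} p(x|y₂) p(u₁|x) log q(x|u₁,u₂) + (s₁/s₂) Σ_{u₁,x} p(x|y₂) p(u₁|x) log q(u₁,u₂) + log q(u₂) − (s₁/s₂) log p(u₂), where p(u₁|x)=Σ_{y₁}p(u₁|y₁)p(y₁|x). Then a strictly positive P_{U₂|Y₂} minimizes the (convex) map P_{U₂|Y₂} ↦ F_s((P_{U₁|Y₁},P_{U₂|Y₂}),Q) over conditional pmfs from 𝒴₂ to 𝒰₂ if and only if it satisfies, for all u₂ and y₂, p(u₂|y₂) = exp(ρ₂(u₂,y₂))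 / Σ_{u₂'} exp(ρ₂(u₂',y₂)). -/
open Finset Real

noncomputable section

variable {X Y1 Y2 U1 U2 : Type} [Fintype X] [Fintype Y1] [Fintype Y2] [Fintype U1] [Fintype U2]

/-- The exponent `ρ₂(u₂,y₂)` of Lemma 3:
`ρ₂(u₂,y₂) = (1/s₂) Σ_{u₁,x} p(x|y₂) p(u₁|x) log q(x|u₁,u₂)
           + (s₁/s₂) Σ_{u₁,x} p(x|y₂) p(u₁|x) log q(u₁,u₂)
           + log q(u₂) − (s₁/s₂) log p(u₂)`,
with `p(x|y₂) = p(x)p(y₂|x)/p(y₂)`, `p(u₁|x) = Σ_{y₁} p(u₁|y₁)p(y₁|x)`, and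
`p(u₂) = Σ_{y₂} p(y₂)p(u₂|y₂)` the marginal induced by the (current) `P_{U₂|Y₂}`. -/
def rho2 (s1 s2 : ℝ) (pX : X → ℝ) (W1 : X → Y1 → ℝ) (W2 : X → Y2 → ℝ)
    (p1 : Y1 → U1 → ℝ) (p2 : Y2 → U2 → ℝ)
    (qX : U1 × U2 → X → ℝ) (qUU : U1 × U2 → ℝ) (qU2 : U2 → ℝ)
    (u2 : U2) (y2 : Y2) : ℝ :=
  (1 / s2) * (∑ u1, ∑ x, (pX x * W2 x y2 / pY2m pX W2 y2) * pU1X W1 p1 x u1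
      * Real.log (qX (u1, u2) x))
  + (s1 / s2) * (∑ u1, ∑ x, (pX x * W2 x y2 / pY2m pX W2 y2) * pU1X W1 p1 x u1
      * Real.log (qUU (u1, u2)))
  + Real.log (qU2 u2) - (s1 / s2) * Real.log (pU2m pX W2 p2 u2)

section Aux
variable {α : Type} [Fintype α]

lemma mul_log_div_eq {z c : ℝ} (hz : 0 ≤ z) (hc : 0 < c) :
    z * Real.log (z / c) = z * Real.log z - z * Real.log c := by
  rcases eq_or_lt_of_le hz with h | h
  · simp [← h]
  · rw [Real.log_div (ne_of_gt h) (ne_of_gt hc)]; ring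

lemma mul_log_div_ge {p g : ℝ} (hp : 0 ≤ p) (hg : 0 < g) :
    p - g ≤ p * Real.log (p / g) := by
  rcases eq_or_lt_of_le hp with h | h
  · simp [← h]; linarith
  · have h1 : Real.log (g / p) ≤ g / p - 1 := Real.log_le_sub_one_of_pos (div_pos hg h)
    have h2 : Real.log (p / g) = - Real.log (g / p) := by
      rw [← Real.log_inv]; congr 1; field_simp
    rw [h2]
    have h3 : p * (g / p - 1) = g - p := by field_simp
    nlinarith
lemma mul_log_div_gt {p g : ℝ} (hp : 0 < p) (hg : 0 < g) (hne : p ≠ g) :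
    p - g < p * Real.log (p / g) := by
  have hne1 : g / p ≠ 1 := by
    intro h
    rw [div_eq_one_iff_eq (ne_of_gt hp)] at h
    exact hne h.symm
  have h1 : Real.log (g / p) < g / p - 1 := Real.log_lt_sub_one_of_pos (div_pos hg hp) hne1
  have h2 : Real.log (p / g) = - Real.log (g / p) := by
    rw [← Real.log_inv]; congr 1; field_simp
  rw [h2]
  have h3 : p * (g / p - 1) = g - p := by field_simp
  nlinarith

lemma mul_log_div_convex {x y c t : ℝ} (hx : 0 ≤ x) (hy : 0 ≤ y) (ht0 : 0 ≤ t) (ht1 : t ≤ 1)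
    (hc : 0 ≤ c) :
    ((1-t)*x + t*y) * Real.log (((1-t)*x + t*y)/c)
      ≤ (1-t)*(x*Real.log (x/c)) + t*(y*Real.log (y/c)) := by
  rcases eq_or_lt_of_le hc with h | h
  · simp [← h]
  · have hz : 0 ≤ (1-t)*x + t*y :=
      add_nonneg (mul_nonneg (by linarith) hx) (mul_nonneg ht0 hy)
    have key := Real.convexOn_mul_log.2 (Set.mem_Ici.2 hx) (Set.mem_Ici.2 hy)
      (by linarith : (0:ℝ) ≤ 1-t) ht0 (by ring)
    simp only [smul_eq_mul] at key
    rw [mul_log_div_eq hz h, mul_log_div_eq hx h, mul_log_div_eq hy h]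
    have hlin : ((1-t)*x + t*y) * Real.log c
        = (1-t)*(x*Real.log c) + t*(y*Real.log c) := by ring
    nlinarith [key]

lemma KL_self (g : α → ℝ) : KL g g = 0 := by
  unfold KL
  apply Finset.sum_eq_zero
  intro a _
  rcases eq_or_ne (g a) 0 with h | h
  · simp [h]
  · simp [div_self h]

lemma KL_nonneg {p g : α → ℝ} (hp : ∀ a, 0 ≤ p a) (hpsum : ∑ a, p a = 1)
    (hg : ∀ a, 0 < g a) (hgsum : ∑ a, g a = 1) : 0 ≤ KL p g := by
  have h := Finset.sum_le_sum (fun a (_ : a ∈ Finset.univ) => mul_log_div_ge (hp a) (hg a))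
  rw [Finset.sum_sub_distrib, hpsum, hgsum] at h
  unfold KL
  linarith

lemma KL_pos {p g : α → ℝ} (hp : ∀ a, 0 < p a) (hpsum : ∑ a, p a = 1)
    (hg : ∀ a, 0 < g a) (hgsum : ∑ a, g a = 1) {b : α} (hb : p b ≠ g b) : 0 < KL p g := by
  have h := Finset.sum_lt_sum (fun a (_ : a ∈ Finset.univ) => mul_log_div_ge (hp a).le (hg a))
    ⟨b, Finset.mem_univ b, mul_log_div_gt (hp b) (hg b) hb⟩
  rw [Finset.sum_sub_distrib, hpsum, hgsum] at h
  unfold KL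
  linarith

lemma kl_expand [Nonempty α] {p ρ : α → ℝ} (hp0 : ∀ a, 0 ≤ p a) (hp1 : ∑ a, p a = 1) :
    ∑ a, p a * (Real.log (p a) - ρ a)
      = KL p (fun a => Real.exp (ρ a) / ∑ b, Real.exp (ρ b))
        - Real.log (∑ b, Real.exp (ρ b)) := by
  have hZ : 0 < ∑ b, Real.exp (ρ b) :=
    Finset.sum_pos (fun b _ => Real.exp_pos _) Finset.univ_nonempty
  have hterm : ∀ a, p a * (Real.log (p a) - ρ a)
      = p a * Real.log (p a / (Real.exp (ρ a) / ∑ b, Real.exp (ρ b)))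
        - p a * Real.log (∑ b, Real.exp (ρ b)) := by
    intro a
    rcases eq_or_lt_of_le (hp0 a) with h | h
    · simp [← h]
    · rw [Real.log_div (ne_of_gt h) (by positivity),
        Real.log_div (Real.exp_ne_zero _) (ne_of_gt hZ), Real.log_exp]
      ring
  rw [Finset.sum_congr rfl fun a _ => hterm a, Finset.sum_sub_distrib, ← Finset.sum_mul, hp1]
  unfold KL
  ring

lemma diff_eq_KL {m' m : α → ℝ} (h0 : ∀ a, 0 ≤ m' a) (hm : ∀ a, 0 < m a) :
    (∑ a, m' a * Real.log (m' a)) - ∑ a, m' a * Real.log (m a) = KL m' m := by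
  unfold KL
  rw [← Finset.sum_sub_distrib]
  apply Finset.sum_congr rfl
  intro a _
  rcases eq_or_lt_of_le (h0 a) with h | h
  · simp [← h]
  · rw [Real.log_div (ne_of_gt h) (ne_of_gt (hm a))]; ring

lemma sum_comm4 {α β γ δ : Type} [Fintype α] [Fintype β] [Fintype γ] [Fintype δ]
    (f : α → β → γ → δ → ℝ) :
    ∑ a, ∑ b, ∑ c, ∑ d, f a b c d = ∑ d, ∑ b, ∑ a, ∑ c, f a b c d := by
  calc ∑ a, ∑ b, ∑ c, ∑ d, f a b c d
      = ∑ a, ∑ b, ∑ d, ∑ c, f a b c d :=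
        Finset.sum_congr rfl fun a _ => Finset.sum_congr rfl fun b _ => Finset.sum_comm
    _ = ∑ a, ∑ d, ∑ b, ∑ c, f a b c d :=
        Finset.sum_congr rfl fun a _ => Finset.sum_comm
    _ = ∑ d, ∑ a, ∑ b, ∑ c, f a b c d := Finset.sum_comm
    _ = ∑ d, ∑ b, ∑ a, ∑ c, f a b c d :=
        Finset.sum_congr rfl fun d _ => Finset.sum_comm

end Aux

section Expand

variable {X Y1 Y2 U1 U2 : Type} [Fintype X] [Fintype Y1] [Fintype Y2] [Fintype U1] [Fintype U2]

lemma FsPQ_expand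
    (pX : X → ℝ) (W1 : X → Y1 → ℝ) (W2 : X → Y2 → ℝ)
    (s1 s2 : ℝ) (hs2 : s2 ≠ 0)
    (qX : U1 × U2 → X → ℝ) (qUU : U1 × U2 → ℝ) (qU2 : U2 → ℝ)
    (p1 : Y1 → U1 → ℝ)
    (hY2 : ∀ y2, pY2m pX W2 y2 ≠ 0)
    (p2 p' : Y2 → U2 → ℝ) :
    FsPQ s1 s2 pX W1 W2 p1 p' qX qUU qU2
      = s1 * (∑ u1, ∑ y1, p1 y1 u1 * pY1m pX W1 y1 * Real.log (p1 y1 u1))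
        + s2 * ∑ y2, pY2m pX W2 y2 *
            ∑ u2, p' y2 u2 * (Real.log (p' y2 u2)
              - rho2 s1 s2 pX W1 W2 p1 p2 qX qUU qU2 u2 y2)
        + s1 * ((∑ u2, pU2m pX W2 p' u2 * Real.log (pU2m pX W2 p' u2))
                 - ∑ u2, pU2m pX W2 p' u2 * Real.log (pU2m pX W2 p2 u2)) := by
  -- generic Fubini for the pUUX-type sums
  have hT1 : ∀ (L : U1 → U2 → X → ℝ),
      (∑ u1, ∑ u2, ∑ x, pUUX pX W1 W2 p1 p' (u1, u2, x) * L u1 u2 x)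
      = ∑ y2, ∑ u2, p' y2 u2
          * ∑ u1, ∑ x, pX x * W2 x y2 * pU1X W1 p1 x u1 * L u1 u2 x := by
    intro L
    have hpt : ∀ u1 u2 x, pUUX pX W1 W2 p1 p' (u1, u2, x) * L u1 u2 x
        = ∑ y2, p' y2 u2 * (pX x * W2 x y2 * pU1X W1 p1 x u1 * L u1 u2 x) := by
      intro u1 u2 x
      simp only [pUUX, pU2X, Finset.mul_sum, Finset.sum_mul]
      exact Finset.sum_congr rfl fun y2 _ => by ring
    simp only [hpt]
    rw [sum_comm4 (f := fun u1 u2 x y2 =>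
      p' y2 u2 * (pX x * W2 x y2 * pU1X W1 p1 x u1 * L u1 u2 x))]
    simp only [← Finset.mul_sum]
  -- Fubini for marginal-type sums
  have hT3 : ∀ (L : U2 → ℝ),
      (∑ u2, pU2m pX W2 p' u2 * L u2)
      = ∑ y2, ∑ u2, p' y2 u2 * (pY2m pX W2 y2 * L u2) := by
    intro L
    simp only [pU2m, Finset.sum_mul]
    rw [Finset.sum_comm]
    exact Finset.sum_congr rfl fun y2 _ => Finset.sum_congr rfl fun u2 _ => by ring
  -- division-cancellation inside rho2
  have hS : ∀ (y2 : Y2) (c : U1 → X → ℝ),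
      (∑ u1, ∑ x, (pX x * W2 x y2 / pY2m pX W2 y2) * pU1X W1 p1 x u1 * c u1 x)
      = (∑ u1, ∑ x, pX x * W2 x y2 * pU1X W1 p1 x u1 * c u1 x) / pY2m pX W2 y2 := by
    intro y2 c
    simp only [Finset.sum_div]
    exact Finset.sum_congr rfl fun u1 _ => Finset.sum_congr rfl fun x _ => by ring
  -- the middle term of the RHS, expanded
  have hmid : ∑ y2, pY2m pX W2 y2 *
        ∑ u2, p' y2 u2 * (Real.log (p' y2 u2)
          - rho2 s1 s2 pX W1 W2 p1 p2 qX qUU qU2 u2 y2)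
      = ∑ y2, ∑ u2,
          (p' y2 u2 * (pY2m pX W2 y2 * Real.log (p' y2 u2))
            - (1/s2) * (p' y2 u2 * ∑ u1, ∑ x, pX x * W2 x y2 * pU1X W1 p1 x u1
                * Real.log (qX (u1, u2) x))
            - (s1/s2) * (p' y2 u2 * ∑ u1, ∑ x, pX x * W2 x y2 * pU1X W1 p1 x u1
                * Real.log (qUU (u1, u2)))
            - p' y2 u2 * (pY2m pX W2 y2 * Real.log (qU2 u2))
            + (s1/s2) * (p' y2 u2 * (pY2m pX W2 y2
                * Real.log (pU2m pX W2 p2 u2)))) := by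
    refine Finset.sum_congr rfl fun y2 _ => ?_
    rw [Finset.mul_sum]
    refine Finset.sum_congr rfl fun u2 _ => ?_
    unfold rho2
    rw [hS y2 (fun u1 x => Real.log (qX (u1, u2) x)),
      hS y2 (fun u1 x => Real.log (qUU (u1, u2)))]
    field_simp [hY2 y2]
    ring
  rw [hmid]
  -- split the big double sum into atoms
  simp only [Finset.sum_add_distrib, Finset.sum_sub_distrib, ← Finset.mul_sum]
  -- rewrite FsPQ in terms of the same atoms
  have e1 : (∑ u1, ∑ u2, ∑ x, pUUX pX W1 W2 p1 p' (u1, u2, x) * Real.log (qX (u1, u2) x))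
      = ∑ y2, ∑ u2, p' y2 u2
          * ∑ u1, ∑ x, pX x * W2 x y2 * pU1X W1 p1 x u1 * Real.log (qX (u1, u2) x) :=
    hT1 _
  have e2 : (∑ u1, ∑ u2, pUU pX W1 W2 p1 p' (u1, u2) * Real.log (qUU (u1, u2)))
      = ∑ y2, ∑ u2, p' y2 u2
          * ∑ u1, ∑ x, pX x * W2 x y2 * pU1X W1 p1 x u1 * Real.log (qUU (u1, u2)) := by
    have : ∀ u1 u2, pUU pX W1 W2 p1 p' (u1, u2) * Real.log (qUU (u1, u2))
        = ∑ x, pUUX pX W1 W2 p1 p' (u1, u2, x) * Real.log (qUU (u1, u2)) := by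
      intro u1 u2
      simp only [pUU, Finset.sum_mul]
    simp only [this]
    exact hT1 _
  have e3 : (∑ u2, pU2m pX W2 p' u2 * Real.log (qU2 u2))
      = ∑ y2, ∑ u2, p' y2 u2 * (pY2m pX W2 y2 * Real.log (qU2 u2)) := hT3 _
  have e4 : (∑ u2, pU2m pX W2 p' u2 * Real.log (pU2m pX W2 p2 u2))
      = ∑ y2, ∑ u2, p' y2 u2 * (pY2m pX W2 y2 * Real.log (pU2m pX W2 p2 u2)) := hT3 _
  have e5 : (∑ u2, ∑ y2, p' y2 u2 * pY2m pX W2 y2 * Real.log (p' y2 u2))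
      = ∑ y2, ∑ u2, p' y2 u2 * (pY2m pX W2 y2 * Real.log (p' y2 u2)) := by
    rw [Finset.sum_comm]
    exact Finset.sum_congr rfl fun y2 _ => Finset.sum_congr rfl fun u2 _ => by ring
  unfold FsPQ
  rw [e1, e2, e3, e4, e5]
  field_simp
  ring

end Expand
/-- **Lemma 3, fixed-point characterization of the optimal `P_{U₂|Y₂}` for fixed `Q`
and fixed `P_{U₁|Y₁}`**: a strictly positive channel `P_{U₂|Y₂}` minimizes
`P_{U₂|Y₂} ↦ F_s((P_{U₁|Y₁},P_{U₂|Y₂}),Q)` over channels from `Y₂` to `U₂` iff it satisfies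
`p(u₂|y₂) = exp ρ₂(u₂,y₂) / Σ_{u₂'} exp ρ₂(u₂',y₂)` for all `u₂`, `y₂`. -/
theorem ceo_fixed_point_P2_for_fixed_Q
    (pX : X → ℝ) (W1 : X → Y1 → ℝ) (W2 : X → Y2 → ℝ)
    (hpX : IsPmf pX) (hW1 : IsChan W1) (hW2 : IsChan W2)
    (s1 s2 : ℝ) (hs1 : 0 < s1) (hs2 : 0 < s2)
    (qX : U1 × U2 → X → ℝ) (qUU : U1 × U2 → ℝ) (qU2 : U2 → ℝ)
    (hqX : IsChan qX) (hqUU : IsPmf qUU) (hqU2 : IsPmf qU2)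
    (hqXpos : ∀ u x, 0 < qX u x) (hqUUpos : ∀ u, 0 < qUU u) (hqU2pos : ∀ u2, 0 < qU2 u2)
    (p1 : Y1 → U1 → ℝ) (hp1 : IsChan p1)
    (hY2pos : ∀ y2, 0 < pY2m pX W2 y2)
    (p2 : Y2 → U2 → ℝ) (hp2 : IsChan p2) (hp2pos : ∀ y2 u2, 0 < p2 y2 u2) :
    (∀ p2' : Y2 → U2 → ℝ, IsChan p2' →
        FsPQ s1 s2 pX W1 W2 p1 p2 qX qUU qU2 ≤ FsPQ s1 s2 pX W1 W2 p1 p2' qX qUU qU2) ↔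
    (∀ u2 y2, p2 y2 u2
      = Real.exp (rho2 s1 s2 pX W1 W2 p1 p2 qX qUU qU2 u2 y2)
        / ∑ u2' : U2, Real.exp (rho2 s1 s2 pX W1 W2 p1 p2 qX qUU qU2 u2' y2)) := by
  classical
  rcases isEmpty_or_nonempty Y2 with hY2e | hY2ne
  · -- degenerate case: `Y2` empty, both sides trivially true
    have hconst : ∀ p : Y2 → U2 → ℝ, FsPQ s1 s2 pX W1 W2 p1 p qX qUU qU2
        = s1 * (∑ u1, ∑ y1, p1 y1 u1 * pY1m pX W1 y1 * Real.log (p1 y1 u1)) := by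
      intro p
      simp [FsPQ, pUUX, pU2X, pUU, pU2m]
    constructor
    · intro _ u2 y2
      exact (hY2e.false y2).elim
    · intro _ p' hp'
      rw [hconst p2, hconst p']
  rcases isEmpty_or_nonempty U2 with hU2e | hU2ne
  · -- degenerate case: `U2` empty contradicts `p2` being a channel
    obtain ⟨y2⟩ := hY2ne
    have h := (hp2 y2).2
    rw [Finset.univ_eq_empty, Finset.sum_empty] at h
    exact absurd h (by norm_num)
  -- main case
  have hwne : ∀ y2, pY2m pX W2 y2 ≠ 0 := fun y2 => (hY2pos y2).ne'
  have hwsum : ∑ y2, pY2m pX W2 y2 = 1 := by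
    simp only [pY2m]
    rw [Finset.sum_comm]
    have h : ∀ x : X, ∑ y2, pX x * W2 x y2 = pX x := by
      intro x; rw [← Finset.mul_sum, (hW2 x).2, mul_one]
    rw [Finset.sum_congr rfl fun x _ => h x, hpX.2]
  have hmarg_sum : ∀ p : Y2 → U2 → ℝ, IsChan p → ∑ u2, pU2m pX W2 p u2 = 1 := by
    intro p hp
    simp only [pU2m]
    rw [Finset.sum_comm]
    have h : ∀ y2 : Y2, ∑ u2, pY2m pX W2 y2 * p y2 u2 = pY2m pX W2 y2 := by
      intro y2; rw [← Finset.mul_sum, (hp y2).2, mul_one]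
    rw [Finset.sum_congr rfl fun y2 _ => h y2, hwsum]
  have hmarg_nonneg : ∀ p : Y2 → U2 → ℝ, (∀ y2 u2, 0 ≤ p y2 u2) →
      ∀ u2, 0 ≤ pU2m pX W2 p u2 := by
    intro p hp u2
    exact Finset.sum_nonneg fun y2 _ => mul_nonneg (hY2pos y2).le (hp y2 u2)
  have hmpos : ∀ u2, 0 < pU2m pX W2 p2 u2 := fun u2 =>
    Finset.sum_pos (fun y2 _ => mul_pos (hY2pos y2) (hp2pos y2 u2)) Finset.univ_nonempty
  set ρ := rho2 s1 s2 pX W1 W2 p1 p2 qX qUU qU2 with hρdef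
  have hZpos : ∀ y2, (0:ℝ) < ∑ u2' : U2, Real.exp (ρ u2' y2) := fun y2 =>
    Finset.sum_pos (fun _ _ => Real.exp_pos _) Finset.univ_nonempty
  set g : Y2 → U2 → ℝ := fun y2 u2 => Real.exp (ρ u2 y2) / ∑ u2' : U2, Real.exp (ρ u2' y2)
    with hgdef
  have hgpos' : ∀ y2 u2, 0 < g y2 u2 := by
    intro y2 u2
    simp only [hgdef]
    exact div_pos (Real.exp_pos _) (hZpos y2)
  have hgsum : ∀ y2, ∑ u2, g y2 u2 = 1 := by
    intro y2
    simp only [hgdef]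
    rw [← Finset.sum_div, div_self (hZpos y2).ne']
  have hgchan : IsChan g := fun y2 => ⟨fun u2 => (hgpos' y2 u2).le, hgsum y2⟩
  -- master evaluation of the functional
  have Hval : ∀ p' : Y2 → U2 → ℝ, IsChan p' →
      FsPQ s1 s2 pX W1 W2 p1 p' qX qUU qU2
        = s1 * (∑ u1, ∑ y1, p1 y1 u1 * pY1m pX W1 y1 * Real.log (p1 y1 u1))
          + s2 * ∑ y2, pY2m pX W2 y2 *
              (KL (fun u2 => p' y2 u2) (g y2) - Real.log (∑ u2' : U2, Real.exp (ρ u2' y2)))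
          + s1 * KL (pU2m pX W2 p') (pU2m pX W2 p2) := by
    intro p' hp'
    have hkl : ∀ y2, (∑ u2, p' y2 u2 * (Real.log (p' y2 u2) - ρ u2 y2))
        = KL (fun u2 => p' y2 u2) (g y2) - Real.log (∑ u2' : U2, Real.exp (ρ u2' y2)) := by
      intro y2
      simp only [hgdef]
      exact kl_expand (fun u2 => (hp' y2).1 u2) (hp' y2).2
    rw [FsPQ_expand pX W1 W2 s1 s2 (ne_of_gt hs2) qX qUU qU2 p1 hwne p2 p', ← hρdef]
    simp only [hkl]
    rw [diff_eq_KL (hmarg_nonneg p' fun y2 u2 => (hp' y2).1 u2) hmpos]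
  constructor
  · -- minimality implies the fixed-point equation
    intro hmin
    by_contra hne
    push_neg at hne
    obtain ⟨u2₀, y2₀, hne0⟩ := hne
    have hne0' : p2 y2₀ u2₀ ≠ g y2₀ u2₀ := by
      simp only [hgdef]
      exact hne0
    have hKL2nn : ∀ y2, 0 ≤ KL (fun u2 => p2 y2 u2) (g y2) := fun y2 =>
      KL_nonneg (fun u2 => (hp2 y2).1 u2) (hp2 y2).2 (hgpos' y2) (hgsum y2)
    have hKLpos : 0 < KL (fun u2 => p2 y2₀ u2) (g y2₀) :=
      KL_pos (fun u2 => hp2pos y2₀ u2) (hp2 y2₀).2 (hgpos' y2₀) (hgsum y2₀) hne0'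
    set D := ∑ y2, pY2m pX W2 y2 * KL (fun u2 => p2 y2 u2) (g y2) with hDdef
    have hDpos : 0 < D := by
      rw [hDdef]
      exact Finset.sum_pos' (fun y2 _ => mul_nonneg (hY2pos y2).le (hKL2nn y2))
        ⟨y2₀, Finset.mem_univ _, mul_pos (hY2pos y2₀) hKLpos⟩
    set C := ∑ u2, (pU2m pX W2 g u2 - pU2m pX W2 p2 u2)^2 / pU2m pX W2 p2 u2 with hCdef
    have hCnn : 0 ≤ C := by
      rw [hCdef]
      exact Finset.sum_nonneg fun u2 _ => div_nonneg (sq_nonneg _) (hmpos u2).le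
    set t := min (1/2 : ℝ) (s2 * D / (s1 * C + 1)) with htdef
    have ht0 : 0 < t := lt_min (by norm_num)
      (div_pos (mul_pos hs2 hDpos) (by positivity))
    have thalf : t ≤ 1/2 := min_le_left _ _
    have htD : t * (s1 * C + 1) ≤ s2 * D := by
      have h := min_le_right (1/2 : ℝ) (s2 * D / (s1 * C + 1))
      rw [le_div_iff₀ (by positivity : (0:ℝ) < s1 * C + 1)] at h
      rw [htdef]
      exact h
    set pt : Y2 → U2 → ℝ := fun y2 u2 => (1 - t) * p2 y2 u2 + t * g y2 u2 with hptdef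
    have hptchan : IsChan pt := by
      intro y2
      constructor
      · intro u2
        simp only [hptdef]
        exact add_nonneg (mul_nonneg (by linarith) ((hp2 y2).1 u2))
          (mul_nonneg ht0.le (hgpos' y2 u2).le)
      · simp only [hptdef]
        rw [Finset.sum_add_distrib, ← Finset.mul_sum, ← Finset.mul_sum,
          (hp2 y2).2, hgsum y2]
        ring
    have hmt : ∀ u2, pU2m pX W2 pt u2
        = (1 - t) * pU2m pX W2 p2 u2 + t * pU2m pX W2 g u2 := by
      intro u2
      simp only [pU2m, hptdef]
      rw [Finset.mul_sum, Finset.mul_sum, ← Finset.sum_add_distrib]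
      exact Finset.sum_congr rfl fun y2 _ => by ring
    have hB1 : ∀ y2, KL (fun u2 => pt y2 u2) (g y2)
        ≤ (1 - t) * KL (fun u2 => p2 y2 u2) (g y2) := by
      intro y2
      have step : KL (fun u2 => pt y2 u2) (g y2)
          ≤ (1 - t) * KL (fun u2 => p2 y2 u2) (g y2)
            + t * KL (fun u2 => g y2 u2) (g y2) := by
        unfold KL
        rw [Finset.mul_sum, Finset.mul_sum, ← Finset.sum_add_distrib]
        refine Finset.sum_le_sum fun u2 _ => ?_
        simp only [hptdef]
        exact mul_log_div_convex ((hp2 y2).1 u2) (hgpos' y2 u2).le ht0.le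
          (by linarith) (hgpos' y2 u2).le
      have hself : KL (fun u2 => g y2 u2) (g y2) = 0 := KL_self _
      rw [hself, mul_zero, add_zero] at step
      exact step
    have hB2 : KL (pU2m pX W2 pt) (pU2m pX W2 p2) ≤ t^2 * C := by
      have hterm : ∀ u2,
          pU2m pX W2 pt u2 * Real.log (pU2m pX W2 pt u2 / pU2m pX W2 p2 u2)
          ≤ t * (pU2m pX W2 g u2 - pU2m pX W2 p2 u2)
            + t^2 * ((pU2m pX W2 g u2 - pU2m pX W2 p2 u2)^2 / pU2m pX W2 p2 u2) := by
        intro u2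
        have hm := hmpos u2
        have hmg : 0 ≤ pU2m pX W2 g u2 :=
          hmarg_nonneg g (fun y2 u2 => (hgpos' y2 u2).le) u2
        have hz : 0 < pU2m pX W2 pt u2 := by
          rw [hmt u2]
          have h1 : 0 < (1 - t) * pU2m pX W2 p2 u2 := mul_pos (by linarith) hm
          have h2 : 0 ≤ t * pU2m pX W2 g u2 := mul_nonneg ht0.le hmg
          linarith
        have hlog : Real.log (pU2m pX W2 pt u2 / pU2m pX W2 p2 u2)
            ≤ pU2m pX W2 pt u2 / pU2m pX W2 p2 u2 - 1 :=
          Real.log_le_sub_one_of_pos (div_pos hz hm)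
        have h2 := mul_le_mul_of_nonneg_left hlog hz.le
        have h3 : pU2m pX W2 pt u2 * (pU2m pX W2 pt u2 / pU2m pX W2 p2 u2 - 1)
            = t * (pU2m pX W2 g u2 - pU2m pX W2 p2 u2)
              + t^2 * ((pU2m pX W2 g u2 - pU2m pX W2 p2 u2)^2 / pU2m pX W2 p2 u2) := by
          rw [hmt u2]
          field_simp
          ring
        linarith
      calc KL (pU2m pX W2 pt) (pU2m pX W2 p2)
          ≤ ∑ u2, (t * (pU2m pX W2 g u2 - pU2m pX W2 p2 u2)
            + t^2 * ((pU2m pX W2 g u2 - pU2m pX W2 p2 u2)^2 / pU2m pX W2 p2 u2)) :=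
            Finset.sum_le_sum fun u2 _ => hterm u2
        _ = t * (∑ u2, (pU2m pX W2 g u2 - pU2m pX W2 p2 u2)) + t^2 * C := by
            rw [Finset.sum_add_distrib, ← Finset.mul_sum, ← Finset.mul_sum, hCdef]
        _ = t^2 * C := by
            rw [Finset.sum_sub_distrib, hmarg_sum g hgchan, hmarg_sum p2 hp2]
            ring
    have h1 := Hval pt hptchan
    have h2 := Hval p2 hp2
    have hKLmm : KL (pU2m pX W2 p2) (pU2m pX W2 p2) = 0 := KL_self _
    have hsum_le : (∑ y2, pY2m pX W2 y2 *
          (KL (fun u2 => pt y2 u2) (g y2) - Real.log (∑ u2' : U2, Real.exp (ρ u2' y2))))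
        ≤ (∑ y2, pY2m pX W2 y2 *
          (KL (fun u2 => p2 y2 u2) (g y2) - Real.log (∑ u2' : U2, Real.exp (ρ u2' y2))))
          - t * D := by
      rw [hDdef, Finset.mul_sum, ← Finset.sum_sub_distrib]
      refine Finset.sum_le_sum fun y2 _ => ?_
      nlinarith [mul_le_mul_of_nonneg_left (hB1 y2) (hY2pos y2).le]
    have hfinal : FsPQ s1 s2 pX W1 W2 p1 pt qX qUU qU2
        < FsPQ s1 s2 pX W1 W2 p1 p2 qX qUU qU2 := by
      rw [h1, h2, hKLmm]
      have hstep := mul_le_mul_of_nonneg_left hsum_le hs2.le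
      have e : s2 * ((∑ y2, pY2m pX W2 y2 *
            (KL (fun u2 => p2 y2 u2) (g y2) - Real.log (∑ u2' : U2, Real.exp (ρ u2' y2))))
            - t * D)
          = s2 * (∑ y2, pY2m pX W2 y2 *
            (KL (fun u2 => p2 y2 u2) (g y2) - Real.log (∑ u2' : U2, Real.exp (ρ u2' y2))))
            - s2 * (t * D) := by ring
      rw [e] at hstep
      have hineq := mul_le_mul_of_nonneg_left hB2 hs1.le
      have hq : s1 * (t^2 * C) < s2 * (t * D) := by
        nlinarith [mul_le_mul_of_nonneg_left htD ht0.le, mul_pos ht0 ht0]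
      linarith
    exact absurd (hmin pt hptchan) (not_le.mpr hfinal)
  · -- the fixed-point equation implies minimality
    intro hfix p' hp'
    have hp2g : ∀ y2, (fun u2 => p2 y2 u2) = g y2 := by
      intro y2
      funext u2
      simp only [hgdef]
      exact hfix u2 y2
    rw [Hval p' hp', Hval p2 hp2]
    have hKLmm : KL (pU2m pX W2 p2) (pU2m pX W2 p2) = 0 := KL_self _
    have hKLm' : 0 ≤ KL (pU2m pX W2 p') (pU2m pX W2 p2) :=
      KL_nonneg (hmarg_nonneg p' fun y2 u2 => (hp' y2).1 u2) (hmarg_sum p' hp')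
        hmpos (hmarg_sum p2 hp2)
    have hsum : (∑ y2, pY2m pX W2 y2 *
          (KL (fun u2 => p2 y2 u2) (g y2) - Real.log (∑ u2' : U2, Real.exp (ρ u2' y2))))
        ≤ ∑ y2, pY2m pX W2 y2 *
          (KL (fun u2 => p' y2 u2) (g y2) - Real.log (∑ u2' : U2, Real.exp (ρ u2' y2))) := by
      refine Finset.sum_le_sum fun y2 _ => ?_
      have h0 : KL (fun u2 => p2 y2 u2) (g y2) = 0 := by
        rw [hp2g y2]; exact KL_self _
      have h1 : 0 ≤ KL (fun u2 => p' y2 u2) (g y2) :=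
        KL_nonneg (fun u2 => (hp' y2).1 u2) (hp' y2).2 (hgpos' y2) (hgsum y2)
      rw [h0]
      exact mul_le_mul_of_nonneg_left (by linarith) (hY2pos y2).le
    rw [hKLmm]
    have h2 := mul_le_mul_of_nonneg_left hsum hs2.le
    have h3 := mul_le_mul_of_nonneg_left hKLm' hs1.le
    linarith
end
end

section
/- (Theorem 4, parametrization of the boundary of RD¹_BT.) Let β=(s₁,s₂,α) with s₁>0, s₂>0, α∈[0,1], ᾱ:=1−α, and let P* be a test-channel pair attaining min_P F_β(P) (the minimum exists by compactness). Define R_{1,β}:=I(Y₁;U₁*|U₂*), R_{2,β}:=I(Y₂;U₂*), D_{1,β}:=H(Y₁|U₁*,U₂*), D_{2,β}:=H(Y₂|U₁*,U₂*). Then αD_{1,β}+ᾱD_{2,β} = −s₁R_{1,β} − s₂R_{2,β} + F_β(P*), and αD_{1,β}+ᾱD_{2,β} = D¹_{BT,α}(R_{1,β},R_{2,β}). -/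
open Finset Real

noncomputable section

variable {Y1 Y2 U1 U2 : Type} [Fintype Y1] [Fintype Y2] [Fintype U1] [Fintype U2]

/-- The joint pmf `p(y₁,y₂,u₁,u₂) = p(y₁,y₂)p(u₁|y₁)p(u₂|y₂)` induced by the source `pY`
and a test-channel pair `(p1, p2)`. -/
def btJoint (pY : Y1 × Y2 → ℝ) (p1 : Y1 → U1 → ℝ) (p2 : Y2 → U2 → ℝ) :
    Y1 × Y2 × U1 × U2 → ℝ :=
  fun z => pY (z.1, z.2.1) * p1 z.1 z.2.2.1 * p2 z.2.1 z.2.2.2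

/-- Marginal `p(y₁,u₁,u₂)`. -/
def bY1U (j : Y1 × Y2 × U1 × U2 → ℝ) : Y1 × U1 × U2 → ℝ :=
  fun z => ∑ y2, j (z.1, y2, z.2.1, z.2.2)

/-- Marginal `p(y₂,u₁,u₂)`. -/
def bY2U (j : Y1 × Y2 × U1 × U2 → ℝ) : Y2 × U1 × U2 → ℝ :=
  fun z => ∑ y1, j (y1, z.1, z.2.1, z.2.2)

/-- Marginal `p(u₁,u₂)`. -/
def bU12 (j : Y1 × Y2 × U1 × U2 → ℝ) : U1 × U2 → ℝ :=
  fun u => ∑ y1, bY1U j (y1, u.1, u.2)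

/-- Marginal `p(u₂)`. -/
def bU2 (j : Y1 × Y2 × U1 × U2 → ℝ) : U2 → ℝ := fun u2 => ∑ u1, bU12 j (u1, u2)

/-- Marginal `p(u₁)`. -/
def bU1 (j : Y1 × Y2 × U1 × U2 → ℝ) : U1 → ℝ := fun u1 => ∑ u2, bU12 j (u1, u2)

/-- Marginal `p(y₁,u₂)`. -/
def bY1U2 (j : Y1 × Y2 × U1 × U2 → ℝ) : Y1 × U2 → ℝ :=
  fun z => ∑ u1, bY1U j (z.1, u1, z.2)

/-- Marginal `p(y₂,u₂)`. -/
def bY2U2 (j : Y1 × Y2 × U1 × U2 → ℝ) : Y2 × U2 → ℝ :=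
  fun z => ∑ u1, bY2U j (z.1, u1, z.2)

/-- Marginal `p(y₂,u₁)`. -/
def bY2U1 (j : Y1 × Y2 × U1 × U2 → ℝ) : Y2 × U1 → ℝ :=
  fun z => ∑ u2, bY2U j (z.1, z.2, u2)

/-- Marginal `p(y₁,u₁)`. -/
def bY1U1 (j : Y1 × Y2 × U1 × U2 → ℝ) : Y1 × U1 → ℝ :=
  fun z => ∑ u2, bY1U j (z.1, z.2, u2)

/-- Marginal `p(y₁)`. -/
def bY1 (j : Y1 × Y2 × U1 × U2 → ℝ) : Y1 → ℝ := fun y1 => ∑ u2, bY1U2 j (y1, u2)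

/-- Marginal `p(y₂)`. -/
def bY2 (j : Y1 × Y2 × U1 × U2 → ℝ) : Y2 → ℝ := fun y2 => ∑ u2, bY2U2 j (y2, u2)

/-- Conditional entropy `H(Y₁|U₁,U₂)`. -/
def bH1 (j : Y1 × Y2 × U1 × U2 → ℝ) : ℝ := ent (bY1U j) - ent (bU12 j)

/-- Conditional entropy `H(Y₂|U₁,U₂)`. -/
def bH2 (j : Y1 × Y2 × U1 × U2 → ℝ) : ℝ := ent (bY2U j) - ent (bU12 j)

/-- Conditional mutual information `I(Y₁;U₁|U₂)`. -/
def bI1c (j : Y1 × Y2 × U1 × U2 → ℝ) : ℝ :=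
  ent (bY1U2 j) + ent (bU12 j) - ent (bU2 j) - ent (bY1U j)

/-- Mutual information `I(Y₂;U₂)`. -/
def bI2m (j : Y1 × Y2 × U1 × U2 → ℝ) : ℝ := ent (bY2 j) + ent (bU2 j) - ent (bY2U2 j)

/-- Conditional mutual information `I(Y₂;U₂|U₁)`. -/
def bI2c (j : Y1 × Y2 × U1 × U2 → ℝ) : ℝ :=
  ent (bY2U1 j) + ent (bU12 j) - ent (bU1 j) - ent (bY2U j)

/-- Mutual information `I(Y₁;U₁)`. -/
def bI1m (j : Y1 × Y2 × U1 × U2 → ℝ) : ℝ := ent (bY1 j) + ent (bU1 j) - ent (bY1U1 j)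

/-- The functional
`F_β(P) = α H(Y₁|U₁,U₂) + (1−α) H(Y₂|U₁,U₂) + s₁ I(Y₁;U₁|U₂) + s₂ I(Y₂;U₂)`. -/
def Fb (s1 s2 a : ℝ) (j : Y1 × Y2 × U1 × U2 → ℝ) : ℝ :=
  a * bH1 j + (1 - a) * bH2 j + s1 * bI1c j + s2 * bI2m j

/-- `D¹_{BT,α}(R₁,R₂)`: the minimal `α H(Y₁|U₁,U₂) + (1−α) H(Y₂|U₁,U₂)` over test-channel
pairs into `V1`, `V2`, subject to `I(Y₁;U₁|U₂) ≤ R₁` and `I(Y₂;U₂) ≤ R₂`. -/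
def Dbt1 (V1 V2 : Type) [Fintype V1] [Fintype V2]
    (pY : Y1 × Y2 → ℝ) (a R1 R2 : ℝ) : ℝ :=
  sInf {d : ℝ | ∃ p1 : Y1 → V1 → ℝ, ∃ p2 : Y2 → V2 → ℝ, IsChan p1 ∧ IsChan p2 ∧
    bI1c (btJoint pY p1 p2) ≤ R1 ∧ bI2m (btJoint pY p1 p2) ≤ R2 ∧
    d = a * bH1 (btJoint pY p1 p2) + (1 - a) * bH2 (btJoint pY p1 p2)}

/-- `D²_{BT,α}(R₁,R₂)`: the minimal `α H(Y₁|U₁,U₂) + (1−α) H(Y₂|U₁,U₂)` subject to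
`I(Y₂;U₂|U₁) ≤ R₂` and `I(Y₁;U₁) ≤ R₁`. -/
def Dbt2 (V1 V2 : Type) [Fintype V1] [Fintype V2]
    (pY : Y1 × Y2 → ℝ) (a R1 R2 : ℝ) : ℝ :=
  sInf {d : ℝ | ∃ p1 : Y1 → V1 → ℝ, ∃ p2 : Y2 → V2 → ℝ, IsChan p1 ∧ IsChan p2 ∧
    bI2c (btJoint pY p1 p2) ≤ R2 ∧ bI1m (btJoint pY p1 p2) ≤ R1 ∧
    d = a * bH1 (btJoint pY p1 p2) + (1 - a) * bH2 (btJoint pY p1 p2)}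

/-- Source marginal `p(y₁)`. -/
def bpY1 (pY : Y1 × Y2 → ℝ) : Y1 → ℝ := fun y1 => ∑ y2, pY (y1, y2)

/-- Source marginal `p(y₂)`. -/
def bpY2 (pY : Y1 × Y2 → ℝ) : Y2 → ℝ := fun y2 => ∑ y1, pY (y1, y2)

/-- Induced marginal `p(u₂) = Σ_{y₂} p(y₂) p(u₂|y₂)`. -/
def bpU2m (pY : Y1 × Y2 → ℝ) (p2 : Y2 → U2 → ℝ) : U2 → ℝ :=
  fun u2 => ∑ y2, bpY2 pY y2 * p2 y2 u2

/-- Induced joint `p(u₁,u₂,y₁) = Σ_{y₂} p(y₁,y₂) p(u₁|y₁) p(u₂|y₂)`. -/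
def bpUUY1 (pY : Y1 × Y2 → ℝ) (p1 : Y1 → U1 → ℝ) (p2 : Y2 → U2 → ℝ) :
    U1 × U2 × Y1 → ℝ :=
  fun z => ∑ y2, pY (z.2.2, y2) * p1 z.2.2 z.1 * p2 y2 z.2.1

/-- Induced joint `p(u₁,u₂,y₂) = Σ_{y₁} p(y₁,y₂) p(u₁|y₁) p(u₂|y₂)`. -/
def bpUUY2 (pY : Y1 × Y2 → ℝ) (p1 : Y1 → U1 → ℝ) (p2 : Y2 → U2 → ℝ) :
    U1 × U2 × Y2 → ℝ :=
  fun z => ∑ y1, pY (y1, z.2.2) * p1 y1 z.1 * p2 z.2.2 z.2.1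

/-- Induced marginal `p(u₁,u₂)`. -/
def bpUU (pY : Y1 × Y2 → ℝ) (p1 : Y1 → U1 → ℝ) (p2 : Y2 → U2 → ℝ) : U1 × U2 → ℝ :=
  fun u => ∑ y1, bpUUY1 pY p1 p2 (u.1, u.2, y1)

/-- The multiterminal Blahut–Arimoto functional `F_β(P,Q)` (real-valued version;
the convention `0 · log 0 = 0` is automatic since vanishing coefficients kill terms). -/
def FbPQ (s1 s2 a : ℝ) (pY : Y1 × Y2 → ℝ) (p1 : Y1 → U1 → ℝ) (p2 : Y2 → U2 → ℝ)
    (qY1 : U1 × U2 → Y1 → ℝ) (qY2 : U1 × U2 → Y2 → ℝ)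
    (qUU : U1 × U2 → ℝ) (qU2 : U2 → ℝ) : ℝ :=
  s1 * (∑ u1, ∑ y1, p1 y1 u1 * bpY1 pY y1 * Real.log (p1 y1 u1))
  + s2 * (∑ u2, ∑ y2, p2 y2 u2 * bpY2 pY y2 * Real.log (p2 y2 u2))
  + s1 * (∑ u2, bpU2m pY p2 u2 * Real.log (bpU2m pY p2 u2))
  - s2 * (∑ u2, bpU2m pY p2 u2 * Real.log (qU2 u2))
  - a * (∑ u1, ∑ u2, ∑ y1, bpUUY1 pY p1 p2 (u1, u2, y1) * Real.log (qY1 (u1, u2) y1))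
  - (1 - a) * (∑ u1, ∑ u2, ∑ y2, bpUUY2 pY p1 p2 (u1, u2, y2) * Real.log (qY2 (u1, u2) y2))
  - s1 * (∑ u1, ∑ u2, bpUU pY p1 p2 (u1, u2) * Real.log (qUU (u1, u2)))

/-- The multiterminal Blahut–Arimoto functional `F_β(P,Q)`, with values in `ℝ ∪ {+∞}`
(a term `−a log q` with positive coefficient and `q = 0` is `+∞`). -/
def FbPQE (s1 s2 a : ℝ) (pY : Y1 × Y2 → ℝ) (p1 : Y1 → U1 → ℝ) (p2 : Y2 → U2 → ℝ)
    (qY1 : U1 × U2 → Y1 → ℝ) (qY2 : U1 × U2 → Y2 → ℝ)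
    (qUU : U1 × U2 → ℝ) (qU2 : U2 → ℝ) : EReal :=
  ((s1 * (∑ u1, ∑ y1, p1 y1 u1 * bpY1 pY y1 * Real.log (p1 y1 u1))
    + s2 * (∑ u2, ∑ y2, p2 y2 u2 * bpY2 pY y2 * Real.log (p2 y2 u2))
    + s1 * (∑ u2, bpU2m pY p2 u2 * Real.log (bpU2m pY p2 u2)) : ℝ) : EReal)
  + (∑ u2, nlogE (s2 * bpU2m pY p2 u2) (qU2 u2))
  + (∑ u1, ∑ u2, ∑ y1, nlogE (a * bpUUY1 pY p1 p2 (u1, u2, y1)) (qY1 (u1, u2) y1))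
  + (∑ u1, ∑ u2, ∑ y2, nlogE ((1 - a) * bpUUY2 pY p1 p2 (u1, u2, y2)) (qY2 (u1, u2) y2))
  + (∑ u1, ∑ u2, nlogE (s1 * bpUU pY p1 p2 (u1, u2)) (qUU (u1, u2)))

/-- **Theorem 4** (parametrization of the boundary of `RD¹_BT`). -/
theorem bt_parametrization
    (pY : Y1 × Y2 → ℝ) (hpY : IsPmf pY)
    (s1 s2 a : ℝ) (hs1 : 0 < s1) (hs2 : 0 < s2) (ha0 : 0 ≤ a) (ha1 : a ≤ 1)
    (P1s : Y1 → U1 → ℝ) (P2s : Y2 → U2 → ℝ) (hP1 : IsChan P1s) (hP2 : IsChan P2s)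
    (hmin : ∀ (p1 : Y1 → U1 → ℝ) (p2 : Y2 → U2 → ℝ), IsChan p1 → IsChan p2 →
      Fb s1 s2 a (btJoint pY P1s P2s) ≤ Fb s1 s2 a (btJoint pY p1 p2))
    (R1b R2b D1b D2b : ℝ)
    (hR1 : R1b = bI1c (btJoint pY P1s P2s))
    (hR2 : R2b = bI2m (btJoint pY P1s P2s))
    (hD1 : D1b = bH1 (btJoint pY P1s P2s))
    (hD2 : D2b = bH2 (btJoint pY P1s P2s)) :
    a * D1b + (1 - a) * D2b
      = -s1 * R1b - s2 * R2b + Fb s1 s2 a (btJoint pY P1s P2s) ∧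
    a * D1b + (1 - a) * D2b = Dbt1 U1 U2 pY a R1b R2b := by
  subst hR1 hR2 hD1 hD2
  constructor
  · unfold Fb; ring
  · set v := a * bH1 (btJoint pY P1s P2s) + (1 - a) * bH2 (btJoint pY P1s P2s) with hv
    set S := {d : ℝ | ∃ p1 : Y1 → U1 → ℝ, ∃ p2 : Y2 → U2 → ℝ, IsChan p1 ∧ IsChan p2 ∧
      bI1c (btJoint pY p1 p2) ≤ bI1c (btJoint pY P1s P2s) ∧
      bI2m (btJoint pY p1 p2) ≤ bI2m (btJoint pY P1s P2s) ∧
      d = a * bH1 (btJoint pY p1 p2) + (1 - a) * bH2 (btJoint pY p1 p2)} with hS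
    have hmem : v ∈ S := ⟨P1s, P2s, hP1, hP2, le_refl _, le_refl _, rfl⟩
    have hlb : ∀ d ∈ S, v ≤ d := by
      rintro d ⟨p1, p2, hc1, hc2, hI1, hI2, rfl⟩
      have h := hmin p1 p2 hc1 hc2
      have h1 : s1 * bI1c (btJoint pY p1 p2) ≤ s1 * bI1c (btJoint pY P1s P2s) :=
        mul_le_mul_of_nonneg_left hI1 hs1.le
      have h2 : s2 * bI2m (btJoint pY p1 p2) ≤ s2 * bI2m (btJoint pY P1s P2s) :=
        mul_le_mul_of_nonneg_left hI2 hs2.le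
      simp only [Fb] at h
      linarith
    exact le_antisymm (le_csInf ⟨v, hmem⟩ hlb) (csInf_le ⟨v, hlb⟩ hmem)
end
end
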